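/- arXiv:2404.19698 — 5 statements merged into one kernel-verified Lean document; each statement's English description precedes it below -/
import Mathlib

section
/- Let A be a densely defined closed injective linear operator in a complex Hilbert space H, let g ∈ ran A ∩ C∞(A), and let f ∈ D(A) be the (unique) solution of Af = g. If f ∈ K̄(A,g)^V, then the set A(K̄(A,g)^V) := {Av : v ∈ K̄(A,g)^V} is dense in K̄(A,g), i.e. its closure in H equals K̄(A,g). -/
open Filter Topology MeasureTheory TopologicalSpace

noncomputable section

namespace KrylovPaper

variable {H : Type*} [NormedAddCommGroup H] [InnerProductSpace ℂ H] [CompleteSpace H]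

/-- `u` is the orbit of `g` under the (unbounded) operator `A`, i.e. `u n = Aⁿ g`,
with every iterate in the domain.  `g ∈ C^∞(A)` is expressed as the existence of such a `u`. -/
def IsOrbit (A : H →ₗ.[ℂ] H) (g : H) (u : ℕ → H) : Prop :=
  u 0 = g ∧ ∀ n, ∃ h : u n ∈ A.domain, A ⟨u n, h⟩ = u (n + 1)

/-- The Krylov subspace `K(A,g) = span {Aᵏ g : k ∈ ℕ₀}`, expressed via the orbit `u`. -/
def krylov (u : ℕ → H) : Set H :=
  (Submodule.span ℂ (Set.range u) : Set H)

/-- The graph norm `‖x‖_A` of an element `x ∈ D(A)`. -/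
def gnorm (A : H →ₗ.[ℂ] H) {x : H} (hx : x ∈ A.domain) : ℝ :=
  Real.sqrt (‖x‖ ^ 2 + ‖A ⟨x, hx⟩‖ ^ 2)

/-- Graph-norm closure `K̄^V` of a set `K`: the elements `x ∈ D(A)` approximable in
graph norm by sequences from `K`. -/
def graphClosure (A : H →ₗ.[ℂ] H) (K : Set H) : Set H :=
  {x | ∃ hx : x ∈ A.domain, ∃ p : ℕ → H, (∀ k, p k ∈ K) ∧
    ∃ hp : ∀ k, p k ∈ A.domain,
      Tendsto (fun k => gnorm A (A.domain.sub_mem (hp k) hx)) atTop (𝓝 0)}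

/-- The graph-inner-product orthogonal complement `K^{⊥_V}` of a set `K ⊆ D(A)`. -/
def perpV (A : H →ₗ.[ℂ] H) (K : Set H) : Set H :=
  {x | ∃ hx : x ∈ A.domain, ∀ y, y ∈ K → ∀ hy : y ∈ A.domain,
    (inner ℂ x y : ℂ) + (inner ℂ (A ⟨x, hx⟩) (A ⟨y, hy⟩) : ℂ) = 0}

/-- The image `A(S)` of a subset `S` of the domain of `A`. -/
def opImage (A : H →ₗ.[ℂ] H) (S : Set H) : Set H :=
  {w | ∃ x, ∃ hx : x ∈ A.domain, x ∈ S ∧ A ⟨x, hx⟩ = w}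

/-- The Krylov intersection `I(A,g) = K̄(A,g) ∩ A(K(A,g)^{⊥_V})`. -/
def krylovIntersection (A : H →ₗ.[ℂ] H) (u : ℕ → H) : Set H :=
  closure (krylov u) ∩ opImage A (perpV A (krylov u))

/-- `μ` is a representing measure for the Hamburger moment problem of `(A,g)`,
where `u n = Aⁿ g`: each monomial is `μ`-integrable and `∫ λⁿ dμ = ⟨Aⁿ g, g⟩`. -/
def IsMomentMeasure (g : H) (u : ℕ → H) (μ : Measure ℝ) : Prop :=
  ∀ n : ℕ, Integrable (fun x : ℝ => x ^ n) μ ∧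
    (inner ℂ (u n) g : ℂ) = ((∫ x : ℝ, x ^ n ∂μ : ℝ) : ℂ)

/-- Determinacy of the Hamburger moment problem associated with `(A,g)`:
there is at most one finite positive Borel measure with the prescribed moments. -/
def IsDeterminate (g : H) (u : ℕ → H) : Prop :=
  ∀ μ ν : Measure ℝ, IsFiniteMeasure μ → IsFiniteMeasure ν →
    IsMomentMeasure g u μ → IsMomentMeasure g u ν → μ = ν

/-- `g` is of the bounded class with respect to `A`. -/
def IsBoundedVector (A : H →ₗ.[ℂ] H) (g : H) : Prop :=
  ∃ u, IsOrbit A g u ∧ ∃ B : ℝ, 0 < B ∧ ∀ n : ℕ, 1 ≤ n → ‖u n‖ ≤ B ^ n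

/-- The weak "norm" induced by a dense sequence `v` of the closed unit ball. -/
def wnorm (v : ℕ → H) (x : H) : ℝ :=
  ∑' n : ℕ, (2 : ℝ)⁻¹ ^ (n + 1) * ‖(inner ℂ (v n) x : ℂ)‖

/-- One-sided weak gap `d_w(C,D)`. -/
def dw (v : ℕ → H) (C D : Set H) : ℝ :=
  ⨆ u : C, ⨅ w : D, wnorm v ((u : H) - (w : H))

/-- The weak-gap metric `d̂_w(C,D)`. -/
def dhat (v : ℕ → H) (C D : Set H) : ℝ :=
  max (dw v C D) (dw v D C)

/-- The weak-gap metric between (closed) subspaces: weak gap of their unit balls. -/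
def dhatSub (v : ℕ → H) (M N : Submodule ℂ H) : ℝ :=
  dhat v ((M : Set H) ∩ Metric.closedBall 0 1) ((N : Set H) ∩ Metric.closedBall 0 1)

/-- A set is weakly closed if it is closed in the weak topology of `H`. -/
def WeaklyClosed (C : Set H) : Prop :=
  IsClosed (⇑(toWeakSpace ℂ H) '' C)

lemma gnorm_tendsto_iff {A : H →ₗ.[ℂ] H} {z : ℕ → H} (hz : ∀ k, z k ∈ A.domain) :
    Tendsto (fun k => gnorm A (hz k)) atTop (𝓝 0) ↔
      (Tendsto z atTop (𝓝 0) ∧ Tendsto (fun k => A ⟨z k, hz k⟩) atTop (𝓝 0)) := by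
  constructor
  · intro h
    constructor
    · rw [tendsto_zero_iff_norm_tendsto_zero]
      refine squeeze_zero (fun k => norm_nonneg _) (fun k => ?_) h
      unfold gnorm
      calc ‖z k‖ = Real.sqrt (‖z k‖ ^ 2) := (Real.sqrt_sq (norm_nonneg _)).symm
        _ ≤ _ := Real.sqrt_le_sqrt (le_add_of_nonneg_right (by positivity))
    · rw [tendsto_zero_iff_norm_tendsto_zero]
      refine squeeze_zero (fun k => norm_nonneg _) (fun k => ?_) h
      unfold gnorm
      calc ‖A ⟨z k, hz k⟩‖ = Real.sqrt (‖A ⟨z k, hz k⟩‖ ^ 2) :=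
            (Real.sqrt_sq (norm_nonneg _)).symm
        _ ≤ _ := Real.sqrt_le_sqrt (le_add_of_nonneg_left (by positivity))
  · rintro ⟨h1, h2⟩
    have h1' : Tendsto (fun k => ‖z k‖ ^ 2) atTop (𝓝 0) := by
      have := (tendsto_zero_iff_norm_tendsto_zero.mp h1).pow 2
      simpa using this
    have h2' : Tendsto (fun k => ‖A ⟨z k, hz k⟩‖ ^ 2) atTop (𝓝 0) := by
      have := (tendsto_zero_iff_norm_tendsto_zero.mp h2).pow 2
      simpa using this
    have := (h1'.add h2').sqrt
    simpa [gnorm] using this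

lemma mem_graphClosure_iff {A : H →ₗ.[ℂ] H} {K : Set H} {x : H} :
    x ∈ graphClosure A K ↔ ∃ hx : x ∈ A.domain, ∃ p : ℕ → H, (∀ k, p k ∈ K) ∧
      ∃ hp : ∀ k, p k ∈ A.domain, Tendsto p atTop (𝓝 x) ∧
        Tendsto (fun k => A ⟨p k, hp k⟩) atTop (𝓝 (A ⟨x, hx⟩)) := by
  constructor
  · rintro ⟨hx, p, hpK, hp, htend⟩
    rw [gnorm_tendsto_iff (A := A) (z := fun k => p k - x)
      (fun k => A.domain.sub_mem (hp k) hx)] at htend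
    obtain ⟨h1, h2⟩ := htend
    refine ⟨hx, p, hpK, hp, by simpa using tendsto_sub_nhds_zero_iff.mp h1, ?_⟩
    have heq : ∀ k, A ⟨p k - x, A.domain.sub_mem (hp k) hx⟩
        = A ⟨p k, hp k⟩ - A ⟨x, hx⟩ := fun k => A.map_sub ⟨p k, hp k⟩ ⟨x, hx⟩
    simp only [heq] at h2
    exact tendsto_sub_nhds_zero_iff.mp h2
  · rintro ⟨hx, p, hpK, hp, h1, h2⟩
    refine ⟨hx, p, hpK, hp, ?_⟩
    rw [gnorm_tendsto_iff (A := A) (z := fun k => p k - x)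
      (fun k => A.domain.sub_mem (hp k) hx)]
    constructor
    · exact tendsto_sub_nhds_zero_iff.mpr h1
    · have heq : ∀ k, A ⟨p k - x, A.domain.sub_mem (hp k) hx⟩
        = A ⟨p k, hp k⟩ - A ⟨x, hx⟩ := fun k => A.map_sub ⟨p k, hp k⟩ ⟨x, hx⟩
      simp only [heq]
      exact tendsto_sub_nhds_zero_iff.mpr h2

lemma krylov_mapsto {A : H →ₗ.[ℂ] H} {g : H} {u : ℕ → H} (hu : IsOrbit A g u) :
    ∀ x ∈ krylov u, ∃ hx : x ∈ A.domain, A ⟨x, hx⟩ ∈ krylov u := by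
  intro x hx
  have hx' : x ∈ Submodule.span ℂ (Set.range u) := hx
  clear hx
  induction hx' using Submodule.span_induction with
  | mem y hy =>
    obtain ⟨n, rfl⟩ := hy
    obtain ⟨hn, hAn⟩ := hu.2 n
    exact ⟨hn, by rw [hAn]; exact Submodule.subset_span ⟨n + 1, rfl⟩⟩
  | zero =>
    refine ⟨A.domain.zero_mem, ?_⟩
    rw [show (⟨0, A.domain.zero_mem⟩ : A.domain) = 0 from rfl, A.map_zero]
    exact (Submodule.span ℂ (Set.range u)).zero_mem
  | add y z hy hz ihy ihz =>
    obtain ⟨h1, h1'⟩ := ihy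
    obtain ⟨h2, h2'⟩ := ihz
    refine ⟨A.domain.add_mem h1 h2, ?_⟩
    rw [show (⟨y + z, A.domain.add_mem h1 h2⟩ : A.domain) = ⟨y, h1⟩ + ⟨z, h2⟩ from rfl,
      A.map_add]
    exact (Submodule.span ℂ (Set.range u)).add_mem h1' h2'
  | smul c y hy ihy =>
    obtain ⟨h1, h1'⟩ := ihy
    refine ⟨A.domain.smul_mem c h1, ?_⟩
    rw [show (⟨c • y, A.domain.smul_mem c h1⟩ : A.domain) = c • ⟨y, h1⟩ from rfl,
      A.map_smul]
    exact (Submodule.span ℂ (Set.range u)).smul_mem c h1'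

lemma const_mem_graphClosure {A : H →ₗ.[ℂ] H} {K : Set H} {x : H}
    (hx : x ∈ A.domain) (hxK : x ∈ K) : x ∈ graphClosure A K :=
  mem_graphClosure_iff.mpr ⟨hx, fun _ => x, fun _ => hxK, fun _ => hx,
    tendsto_const_nhds, tendsto_const_nhds⟩

theorem statement2 (A : H →ₗ.[ℂ] H) (hdense : Dense (A.domain : Set H))
    (hclosed : A.IsClosed)
    (hinj : Function.Injective fun x : A.domain => A x)
    (g : H) (u : ℕ → H) (hu : IsOrbit A g u)
    (f : H) (hf : f ∈ A.domain) (hAf : A ⟨f, hf⟩ = g)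
    (hfK : f ∈ graphClosure A (krylov u)) :
    closure (opImage A (graphClosure A (krylov u))) = closure (krylov u) := by
  apply subset_antisymm
  · refine closure_minimal ?_ isClosed_closure
    rintro w ⟨x, hx, hxG, rfl⟩
    obtain ⟨hx', p, hpK, hp, hptend, hAtend⟩ := mem_graphClosure_iff.mp hxG
    refine mem_closure_of_tendsto hAtend (Eventually.of_forall fun k => ?_)
    exact (krylov_mapsto hu _ (hpK k)).2
  · apply closure_mono
    intro x hx
    have hx' : x ∈ Submodule.span ℂ (Set.range u) := hx
    clear hx
    induction hx' using Submodule.span_induction with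
    | mem y hy =>
      obtain ⟨n, rfl⟩ := hy
      cases n with
      | zero => exact ⟨f, hf, hfK, hAf.trans hu.1.symm⟩
      | succ n =>
        obtain ⟨hn, hAn⟩ := hu.2 n
        exact ⟨u n, hn, const_mem_graphClosure hn (Submodule.subset_span ⟨n, rfl⟩), hAn⟩
    | zero =>
      refine ⟨0, A.domain.zero_mem, const_mem_graphClosure A.domain.zero_mem
        (Submodule.zero_mem _), ?_⟩
      rw [show (⟨0, A.domain.zero_mem⟩ : A.domain) = 0 from rfl, A.map_zero]
    | add y z hy hz ihy ihz =>
      obtain ⟨vy, hvy, hvyG, rfl⟩ := ihy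
      obtain ⟨vz, hvz, hvzG, rfl⟩ := ihz
      obtain ⟨hvy', py, hpyK, hpy, h1y, h2y⟩ := mem_graphClosure_iff.mp hvyG
      obtain ⟨hvz', pz, hpzK, hpz, h1z, h2z⟩ := mem_graphClosure_iff.mp hvzG
      refine ⟨vy + vz, A.domain.add_mem hvy hvz, mem_graphClosure_iff.mpr
        ⟨A.domain.add_mem hvy hvz, fun k => py k + pz k,
          fun k => (Submodule.span ℂ (Set.range u)).add_mem (hpyK k) (hpzK k),
          fun k => A.domain.add_mem (hpy k) (hpz k), h1y.add h1z, ?_⟩, ?_⟩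
      · have heq : ∀ k, A ⟨py k + pz k, A.domain.add_mem (hpy k) (hpz k)⟩
            = A ⟨py k, hpy k⟩ + A ⟨pz k, hpz k⟩ :=
          fun k => A.map_add ⟨py k, hpy k⟩ ⟨pz k, hpz k⟩
        simp only [heq]
        have := h2y.add h2z
        convert this using 2
        exact A.map_add ⟨vy, hvy⟩ ⟨vz, hvz⟩
      · exact A.map_add ⟨vy, hvy⟩ ⟨vz, hvz⟩
    | smul c y hy ihy =>
      obtain ⟨vy, hvy, hvyG, rfl⟩ := ihy
      obtain ⟨hvy', py, hpyK, hpy, h1y, h2y⟩ := mem_graphClosure_iff.mp hvyG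
      refine ⟨c • vy, A.domain.smul_mem c hvy, mem_graphClosure_iff.mpr
        ⟨A.domain.smul_mem c hvy, fun k => c • py k,
          fun k => (Submodule.span ℂ (Set.range u)).smul_mem c (hpyK k),
          fun k => A.domain.smul_mem c (hpy k), h1y.const_smul c, ?_⟩, ?_⟩
      · have heq : ∀ k, A ⟨c • py k, A.domain.smul_mem c (hpy k)⟩
            = c • A ⟨py k, hpy k⟩ := fun k => A.map_smul c ⟨py k, hpy k⟩
        simp only [heq]
        have := h2y.const_smul c
        convert this using 2
        exact A.map_smul c ⟨vy, hvy⟩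
      · exact A.map_smul c ⟨vy, hvy⟩

end KrylovPaper
end
end

section
/- Let A be a densely defined closed linear operator in a complex Hilbert space H and let g ∈ ran A ∩ C∞(A). If the Krylov intersection is trivial, I(A,g) = {0}, then there exists a solution f of the inverse linear problem Af = g with f ∈ K̄(A,g)^V. -/
open Filter Topology MeasureTheory TopologicalSpace

noncomputable section

namespace KrylovPaper

variable {H : Type*} [NormedAddCommGroup H] [InnerProductSpace ℂ H] [CompleteSpace H]

set_option synthInstance.maxHeartbeats 1000000 in
theorem statement4 (A : H →ₗ.[ℂ] H) (hdense : Dense (A.domain : Set H))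
    (hclosed : A.IsClosed)
    (g : H) (u : ℕ → H) (hu : IsOrbit A g u)
    (hran : ∃ x, ∃ hx : x ∈ A.domain, A ⟨x, hx⟩ = g)
    (htriv : krylovIntersection A u = ({0} : Set H)) :
    ∃ f, ∃ hf : f ∈ A.domain, f ∈ graphClosure A (krylov u) ∧ A ⟨f, hf⟩ = g := by
  classical
  set E := WithLp 2 (H × H) with hE
  let e : E ≃L[ℂ] H × H := WithLp.prodContinuousLinearEquiv 2 ℂ H H
  -- the graph as a submodule of E
  let G : Submodule ℂ E := A.graph.comap (e : E →ₗ[ℂ] H × H)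
  have hGmem : ∀ x : E, x ∈ G ↔ (x.fst, x.snd) ∈ A.graph := by
    intro x; rfl
  have hGclosed : IsClosed (G : Set E) := by
    have : (G : Set E) = ⇑e ⁻¹' (A.graph : Set (H × H)) := rfl
    rw [this]
    exact hclosed.preimage e.continuous
  have : CompleteSpace G := hGclosed.completeSpace_coe
  -- components of an element of G are in the domain / image
  have hGdom : ∀ x : G, ∃ h : (x : E).fst ∈ A.domain,
      A ⟨(x : E).fst, h⟩ = (x : E).snd := by
    rintro ⟨x, hx⟩
    rw [hGmem] at hx
    rw [LinearPMap.mem_graph_iff] at hx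
    obtain ⟨y, hy1, hy2⟩ := hx
    refine ⟨Eq.subst (motive := fun a => a ∈ A.domain) hy1 y.2, ?_⟩
    have : (⟨(x.fst), Eq.subst (motive := fun a => a ∈ A.domain) hy1 y.2⟩ : A.domain) = y := Subtype.ext hy1.symm
    rw [this]; exact hy2
  -- the Krylov vectors inside G
  have hkvecmem : ∀ n : ℕ, ((WithLp.equiv 2 (H × H)).symm (u n, u (n + 1)) : E) ∈ G := by
    intro n
    rw [hGmem, LinearPMap.mem_graph_iff]
    obtain ⟨hn, hAn⟩ := hu.2 n
    exact ⟨⟨u n, hn⟩, rfl, hAn⟩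
  let kvec : ℕ → G := fun n => ⟨(WithLp.equiv 2 (H × H)).symm (u n, u (n + 1)), hkvecmem n⟩
  let Ksub : Submodule ℂ G := Submodule.span ℂ (Set.range kvec)
  let M : Submodule ℂ G := Ksub.topologicalClosure
  -- projections from G to H
  let π₁ : G →L[ℂ] H := (ContinuousLinearMap.fst ℂ H H).comp
    ((e : E →L[ℂ] H × H).comp G.subtypeL)
  let π₂ : G →L[ℂ] H := (ContinuousLinearMap.snd ℂ H H).comp
    ((e : E →L[ℂ] H × H).comp G.subtypeL)
  have hπ₁ : ∀ x : G, π₁ x = (x : E).fst := fun x => rfl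
  have hπ₂ : ∀ x : G, π₂ x = (x : E).snd := fun x => rfl
  -- Ksub maps into the Krylov space under both projections
  let N : Submodule ℂ H := Submodule.span ℂ (Set.range u)
  have hπ₁K : ∀ q : G, q ∈ Ksub → π₁ q ∈ N := by
    intro q hq
    have : Ksub.map (π₁ : G →ₗ[ℂ] H) ≤ N := by
      rw [Submodule.map_span, Submodule.span_le]
      rintro _ ⟨_, ⟨n, rfl⟩, rfl⟩
      exact Submodule.subset_span ⟨n, rfl⟩
    exact this ⟨q, hq, rfl⟩
  have hπ₂K : ∀ q : G, q ∈ Ksub → π₂ q ∈ N := by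
    intro q hq
    have : Ksub.map (π₂ : G →ₗ[ℂ] H) ≤ N := by
      rw [Submodule.map_span, Submodule.span_le]
      rintro _ ⟨_, ⟨n, rfl⟩, rfl⟩
      exact Submodule.subset_span ⟨n + 1, rfl⟩
    exact this ⟨q, hq, rfl⟩
  -- the solution vector in G
  obtain ⟨x0, hx0, hAx0⟩ := hran
  have hwmem : ((WithLp.equiv 2 (H × H)).symm (x0, g) : E) ∈ G := by
    rw [hGmem, LinearPMap.mem_graph_iff]
    exact ⟨⟨x0, hx0⟩, rfl, hAx0⟩
  let w : G := ⟨(WithLp.equiv 2 (H × H)).symm (x0, g), hwmem⟩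
  -- orthogonal projection onto M
  let P : G := (M.orthogonalProjectionOnto w : G)
  have hPM : P ∈ M := (M.orthogonalProjectionOnto w).2
  have hperp : w - P ∈ Mᗮ := Submodule.sub_starProjection_mem_orthogonal (K := M) w
  -- f is the first component of P
  obtain ⟨hf, hAf⟩ := hGdom P
  set f : H := (P : E).fst with hfdef
  refine ⟨f, hf, ?_, ?_⟩
  · -- f ∈ graphClosure A (krylov u)
    refine ⟨hf, ?_⟩
    -- approximating sequence in Ksub
    have hPcl : P ∈ closure (Ksub : Set G) := by
      have : (M : Set G) = closure (Ksub : Set G) := rfl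
      rw [← this]; exact hPM
    rw [mem_closure_iff_seq_limit] at hPcl
    obtain ⟨q, hqK, hqlim⟩ := hPcl
    refine ⟨fun k => π₁ (q k), fun k => hπ₁K (q k) (hqK k), fun k => (hGdom (q k)).1, ?_⟩
    have key : ∀ k, gnorm A ((A.domain).sub_mem (hGdom (q k)).1 hf) = ‖q k - P‖ := by
      intro k
      have hd : ∀ x : G, ∀ hx1 : (x : E).fst ∈ A.domain,
          A ⟨(x : E).fst, hx1⟩ = (x : E).snd := by
        intro x hx1
        obtain ⟨h1, h2⟩ := hGdom x
        have : (⟨(x : E).fst, hx1⟩ : A.domain) = ⟨(x : E).fst, h1⟩ := rfl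
        rw [this]; exact h2
      have hsubdom : ((q k : E) - (P : E)).fst ∈ A.domain := by
        exact (A.domain).sub_mem (hGdom (q k)).1 hf
      have hval : A ⟨(q k : E).fst - f, (A.domain).sub_mem (hGdom (q k)).1 hf⟩
          = ((q k : E) - (P : E)).snd := by
        have h1 : (⟨(q k : E).fst - f, (A.domain).sub_mem (hGdom (q k)).1 hf⟩ : A.domain)
            = ⟨(q k : E).fst, (hGdom (q k)).1⟩ - ⟨f, hf⟩ := rfl
        rw [h1, A.map_sub, hd (q k) (hGdom (q k)).1, hAf]
        rfl
      rw [gnorm]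
      rw [hval]
      have hfst : (q k : E).fst - f = ((q k : E) - (P : E)).fst := rfl
      rw [hfst]
      rw [← WithLp.prod_norm_sq_eq_of_L2 ((q k : E) - (P : E))]
      rw [Real.sqrt_sq (norm_nonneg _)]
      rfl
    have : Tendsto (fun k => ‖q k - P‖) atTop (𝓝 0) := by
      have := hqlim.sub_const P
      rw [sub_self] at this
      simpa using this.norm
    exact this.congr (fun k => (key k).symm)
  · -- A f = g
    have hAfval : A ⟨f, hf⟩ = (P : E).snd := hAf
    -- the difference vector
    have hvdom : x0 - f ∈ A.domain := (A.domain).sub_mem hx0 hf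
    have hvval : A ⟨x0 - f, hvdom⟩ = g - (P : E).snd := by
      have h1 : (⟨x0 - f, hvdom⟩ : A.domain) = ⟨x0, hx0⟩ - ⟨f, hf⟩ := rfl
      rw [h1, A.map_sub, hAx0, hAf]
    -- g - (P:E).snd is in the Krylov intersection
    have hmem1 : g - (P : E).snd ∈ closure (krylov u) := by
      have hg : g ∈ N := by
        have := hu.1
        exact Submodule.subset_span ⟨0, this⟩
      have hAfN : (P : E).snd ∈ closure (N : Set H) := by
        have hPcl : P ∈ closure (Ksub : Set G) := hPM
        have h1 : π₂ P ∈ closure (π₂ '' (Ksub : Set G)) :=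
          image_closure_subset_closure_image π₂.continuous ⟨P, hPcl, rfl⟩
        have h2 : closure (π₂ '' (Ksub : Set G)) ⊆ closure (N : Set H) := by
          apply closure_mono
          rintro _ ⟨q, hq, rfl⟩
          exact hπ₂K q hq
        exact h2 h1
      have hcl : closure (krylov u) = (N.topologicalClosure : Set H) := rfl
      rw [hcl]
      exact Submodule.sub_mem _ (N.le_topologicalClosure hg) hAfN
    have hmem2 : g - (P : E).snd ∈ opImage A (perpV A (krylov u)) := by
      refine ⟨x0 - f, hvdom, ?_, hvval⟩
      refine ⟨hvdom, ?_⟩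
      intro y hy hydom
      -- find q ∈ Ksub with π₁ q = y
      have hyN : y ∈ N := hy
      have hNle : N ≤ Ksub.map (π₁ : G →ₗ[ℂ] H) := by
        rw [Submodule.span_le]
        rintro _ ⟨n, rfl⟩
        exact ⟨kvec n, Submodule.subset_span ⟨n, rfl⟩, rfl⟩
      obtain ⟨q, hqK, hqy⟩ := hNle hyN
      have hAy : A ⟨y, hydom⟩ = (q : E).snd := by
        obtain ⟨h1, h2⟩ := hGdom q
        have : (⟨y, hydom⟩ : A.domain) = ⟨(q : E).fst, h1⟩ := Subtype.ext hqy.symm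
        rw [this]; exact h2
      -- orthogonality
      have horth : (inner ℂ (w - P : G) q : ℂ) = 0 := by
        have hqM : q ∈ M := Ksub.le_topologicalClosure hqK
        exact (Submodule.mem_orthogonal' M _).1 hperp q hqM
      have hinner : (inner ℂ (w - P : G) q : ℂ)
          = (inner ℂ (x0 - f) y : ℂ) + (inner ℂ (g - (P : E).snd) ((q : E).snd) : ℂ) := by
        have h1 : (inner ℂ (w - P : G) q : ℂ)
            = (inner ℂ ((w : E) - (P : E)) (q : E) : ℂ) := rfl
        have h2 : ((w : E) - (P : E)).fst = x0 - f := rfl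
        have h3 : ((w : E) - (P : E)).snd = g - (P : E).snd := rfl
        have h4 : (q : E).fst = y := hqy
        rw [h1, WithLp.prod_inner_apply, ← h2, ← h3, ← h4]; rfl
      rw [hvval, hAy, ← hinner]
      exact horth
    have : g - (P : E).snd ∈ krylovIntersection A u := ⟨hmem1, hmem2⟩
    rw [htriv] at this
    have h0 : g - (P : E).snd = 0 := this
    rw [hAfval]
    exact (sub_eq_zero.mp h0).symm


end KrylovPaper
end
end

section
/- Let A be a densely defined closed linear operator in a complex Hilbert space H that is a bijection from D(A) onto H with bounded inverse A⁻¹ : H → H (i.e. 0 is in the resolvent set of A), and let g ∈ C∞(A). Then the unique solution f := A⁻¹g of Af = g satisfies f ∈ K̄(A,g)^V if and only if the Krylov intersection is trivial, I(A,g) = {0}. -/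
open Filter Topology MeasureTheory TopologicalSpace

noncomputable section

namespace KrylovPaper

variable {H : Type*} [NormedAddCommGroup H] [InnerProductSpace ℂ H] [CompleteSpace H]

set_option maxHeartbeats 1000000
set_option synthInstance.maxHeartbeats 1000000

/-! ### Auxiliary machinery for `statement5` -/

/-- The canonical identification of `H × H` with the `L²` product, as a map on pairs. -/
def liftE (x y : H) : WithLp 2 (H × H) :=
  (WithLp.linearEquiv 2 ℂ (H × H)).symm (x, y)

/-- The lifted Krylov subspace inside the graph space. -/
def PE (u : ℕ → H) : Submodule ℂ (WithLp 2 (H × H)) :=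
  Submodule.span ℂ (Set.range fun n => liftE (u n) (u (n + 1)))

lemma inner_liftE (a b c d : H) :
    (inner ℂ (liftE a b) (liftE c d) : ℂ) = inner ℂ a c + inner ℂ b d := rfl

lemma tendsto_liftE {x y : ℕ → H} {a b : H} (hx : Tendsto x atTop (𝓝 a))
    (hy : Tendsto y atTop (𝓝 b)) :
    Tendsto (fun k => liftE (x k) (y k)) atTop (𝓝 (liftE a b)) :=
  (((WithLp.prodContinuousLinearEquiv 2 ℂ H H).symm.continuous.tendsto
    ((a, b) : H × H)).comp (hx.prodMk_nhds hy) : _)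

lemma tendsto_liftE_fst {x y : ℕ → H} {a b : H}
    (h : Tendsto (fun k => liftE (x k) (y k)) atTop (𝓝 (liftE a b))) :
    Tendsto x atTop (𝓝 a) :=
  (((continuous_fst.comp
      (WithLp.prodContinuousLinearEquiv 2 ℂ H H).continuous).tendsto (liftE a b)).comp h : _)

lemma tendsto_liftE_snd {x y : ℕ → H} {a b : H}
    (h : Tendsto (fun k => liftE (x k) (y k)) atTop (𝓝 (liftE a b))) :
    Tendsto y atTop (𝓝 b) :=
  (((continuous_snd.comp
      (WithLp.prodContinuousLinearEquiv 2 ℂ H H).continuous).tendsto (liftE a b)).comp h : _)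

/-- Every element of the Krylov subspace lifts into `PE u`. -/
lemma mem_PE {A : H →ₗ.[ℂ] H} {g : H} {u : ℕ → H} (hu : IsOrbit A g u) :
    ∀ x ∈ Submodule.span ℂ (Set.range u),
      ∃ hx : x ∈ A.domain, liftE x (A ⟨x, hx⟩) ∈ PE u := by
  intro x hx
  induction hx using Submodule.span_induction with
  | mem x h =>
      obtain ⟨n, rfl⟩ := h
      obtain ⟨hn, hAn⟩ := hu.2 n
      refine ⟨hn, ?_⟩
      rw [show A ⟨u n, hn⟩ = u (n + 1) from hAn]
      exact Submodule.subset_span ⟨n, rfl⟩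
  | zero =>
      refine ⟨A.domain.zero_mem, ?_⟩
      rw [show A ⟨(0 : H), A.domain.zero_mem⟩ = 0 from A.map_zero,
        show liftE (0 : H) (0 : H) = 0 from rfl]
      exact (PE u).zero_mem
  | add x y hx hy ihx ihy =>
      obtain ⟨hx', hxP⟩ := ihx
      obtain ⟨hy', hyP⟩ := ihy
      refine ⟨A.domain.add_mem hx' hy', ?_⟩
      rw [show A ⟨x + y, A.domain.add_mem hx' hy'⟩ = A ⟨x, hx'⟩ + A ⟨y, hy'⟩ from
        A.map_add ⟨x, hx'⟩ ⟨y, hy'⟩,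
        show liftE (x + y) (A ⟨x, hx'⟩ + A ⟨y, hy'⟩)
          = liftE x (A ⟨x, hx'⟩) + liftE y (A ⟨y, hy'⟩) from rfl]
      exact (PE u).add_mem hxP hyP
  | smul c x hx ih =>
      obtain ⟨hx', hxP⟩ := ih
      refine ⟨A.domain.smul_mem c hx', ?_⟩
      rw [show A ⟨c • x, A.domain.smul_mem c hx'⟩ = c • A ⟨x, hx'⟩ from
        A.map_smul c ⟨x, hx'⟩,
        show liftE (c • x) (c • A ⟨x, hx'⟩) = c • liftE x (A ⟨x, hx'⟩) from rfl]
      exact (PE u).smul_mem c hxP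

/-- Structure of elements of `PE u`. -/
lemma PE_spec {A : H →ₗ.[ℂ] H} {g : H} {u : ℕ → H} (hu : IsOrbit A g u) :
    ∀ z ∈ PE u, ∃ x y : H, z = liftE x y ∧ x ∈ Submodule.span ℂ (Set.range u) ∧
      y ∈ Submodule.span ℂ (Set.range fun n => u (n + 1)) ∧
      ∃ hx : x ∈ A.domain, A ⟨x, hx⟩ = y := by
  intro z hz
  induction hz using Submodule.span_induction with
  | mem z h =>
      obtain ⟨n, rfl⟩ := h
      obtain ⟨hn, hAn⟩ := hu.2 n
      exact ⟨u n, u (n + 1), rfl, Submodule.subset_span ⟨n, rfl⟩,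
        Submodule.subset_span ⟨n, rfl⟩, hn, hAn⟩
  | zero =>
      exact ⟨0, 0, rfl, zero_mem _, zero_mem _, A.domain.zero_mem, A.map_zero⟩
  | add a b ha hb iha ihb =>
      obtain ⟨x, y, rfl, hxK, hyQ, hx, hAx⟩ := iha
      obtain ⟨x', y', rfl, hxK', hyQ', hx', hAx'⟩ := ihb
      exact ⟨x + x', y + y', rfl, add_mem hxK hxK', add_mem hyQ hyQ',
        A.domain.add_mem hx hx',
        (A.map_add ⟨x, hx⟩ ⟨x', hx'⟩).trans (by rw [hAx, hAx'])⟩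
  | smul c a ha iha =>
      obtain ⟨x, y, rfl, hxK, hyQ, hx, hAx⟩ := iha
      exact ⟨c • x, c • y, rfl, Submodule.smul_mem _ c hxK, Submodule.smul_mem _ c hyQ,
        A.domain.smul_mem c hx,
        (A.map_smul c ⟨x, hx⟩).trans (by rw [hAx])⟩

/-- Every element of the shifted Krylov subspace is `A` of a Krylov element,
with the pair lying in `PE u`. -/
lemma QE_spec {A : H →ₗ.[ℂ] H} {g : H} {u : ℕ → H} (hu : IsOrbit A g u) :
    ∀ y ∈ Submodule.span ℂ (Set.range fun n => u (n + 1)),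
      ∃ x, ∃ hx : x ∈ A.domain, A ⟨x, hx⟩ = y ∧ liftE x y ∈ PE u := by
  intro y hy
  induction hy using Submodule.span_induction with
  | mem y h =>
      obtain ⟨n, rfl⟩ := h
      obtain ⟨hn, hAn⟩ := hu.2 n
      exact ⟨u n, hn, hAn, Submodule.subset_span ⟨n, rfl⟩⟩
  | zero =>
      exact ⟨0, A.domain.zero_mem, A.map_zero, (PE u).zero_mem⟩
  | add a b ha hb iha ihb =>
      obtain ⟨x, hx, hAx, hP⟩ := iha
      obtain ⟨x', hx', hAx', hP'⟩ := ihb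
      refine ⟨x + x', A.domain.add_mem hx hx',
        (A.map_add ⟨x, hx⟩ ⟨x', hx'⟩).trans (by rw [hAx, hAx']), ?_⟩
      rw [show liftE (x + x') (a + b) = liftE x a + liftE x' b from rfl]
      exact (PE u).add_mem hP hP'
  | smul c a ha iha =>
      obtain ⟨x, hx, hAx, hP⟩ := iha
      refine ⟨c • x, A.domain.smul_mem c hx,
        (A.map_smul c ⟨x, hx⟩).trans (by rw [hAx]), ?_⟩
      rw [show liftE (c • x) (c • a) = c • liftE x a from rfl]
      exact (PE u).smul_mem c hP

/-- The key translation: membership of `f` in the graph-norm closure of the Krylov subspace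
is equivalent to membership of the lifted pair in the closure of `PE u`. -/
lemma graphClosure_iff_liftE {A : H →ₗ.[ℂ] H} {g : H} {u : ℕ → H} (hu : IsOrbit A g u)
    {f : H} (hf : f ∈ A.domain) (hAf : A ⟨f, hf⟩ = g) :
    f ∈ graphClosure A (krylov u) ↔
      liftE f g ∈ closure (PE u : Set (WithLp 2 (H × H))) := by
  constructor
  · rintro ⟨hx, p, hpK, hp, htend⟩
    have hfx : A ⟨f, hx⟩ = g := hAf
    have hsub : ∀ k, A ⟨p k - f, A.domain.sub_mem (hp k) hx⟩ = A ⟨p k, hp k⟩ - g :=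
      fun k => (A.map_sub ⟨p k, hp k⟩ ⟨f, hx⟩).trans (by rw [hfx])
    have hgn : ∀ k, gnorm A (A.domain.sub_mem (hp k) hx) =
        Real.sqrt (‖p k - f‖ ^ 2 + ‖A ⟨p k, hp k⟩ - g‖ ^ 2) := by
      intro k
      simp only [gnorm, hsub k]
    have htend' : Tendsto
        (fun k => Real.sqrt (‖p k - f‖ ^ 2 + ‖A ⟨p k, hp k⟩ - g‖ ^ 2)) atTop (𝓝 0) :=
      htend.congr hgn
    have h1 : Tendsto (fun k => ‖p k - f‖) atTop (𝓝 0) := by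
      refine squeeze_zero (fun k => norm_nonneg _) (fun k => ?_) htend'
      calc ‖p k - f‖ = Real.sqrt (‖p k - f‖ ^ 2) := (Real.sqrt_sq (norm_nonneg _)).symm
      _ ≤ _ := Real.sqrt_le_sqrt (le_add_of_nonneg_right (sq_nonneg _))
    have h2 : Tendsto (fun k => ‖A ⟨p k, hp k⟩ - g‖) atTop (𝓝 0) := by
      refine squeeze_zero (fun k => norm_nonneg _) (fun k => ?_) htend'
      calc ‖A ⟨p k, hp k⟩ - g‖ = Real.sqrt (‖A ⟨p k, hp k⟩ - g‖ ^ 2) :=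
            (Real.sqrt_sq (norm_nonneg _)).symm
      _ ≤ _ := Real.sqrt_le_sqrt (le_add_of_nonneg_left (sq_nonneg _))
    have hpt : Tendsto p atTop (𝓝 f) := tendsto_iff_norm_sub_tendsto_zero.mpr h1
    have hAt : Tendsto (fun k => A ⟨p k, hp k⟩) atTop (𝓝 g) :=
      tendsto_iff_norm_sub_tendsto_zero.mpr h2
    refine mem_closure_of_tendsto (tendsto_liftE hpt hAt) (Eventually.of_forall fun k => ?_)
    obtain ⟨hk, hmem⟩ := mem_PE hu (p k) (hpK k)
    exact hmem
  · intro hM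
    obtain ⟨q, hqP, hql⟩ := mem_closure_iff_seq_limit.mp hM
    choose x y hqe hxK hyQ hxd hAx using fun k => PE_spec hu (q k) (hqP k)
    have hql' : Tendsto (fun k => liftE (x k) (y k)) atTop (𝓝 (liftE f g)) := by
      refine hql.congr fun k => ?_
      rw [← hqe k]
    have hxt : Tendsto x atTop (𝓝 f) := tendsto_liftE_fst hql'
    have hyt : Tendsto y atTop (𝓝 g) := tendsto_liftE_snd hql'
    refine ⟨hf, x, (fun k => hxK k), hxd, ?_⟩
    have hsub : ∀ k, A ⟨x k - f, A.domain.sub_mem (hxd k) hf⟩ = y k - g :=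
      fun k => (A.map_sub ⟨x k, hxd k⟩ ⟨f, hf⟩).trans (by rw [hAx k, hAf])
    have h1 : Tendsto (fun k => ‖x k - f‖) atTop (𝓝 0) :=
      tendsto_iff_norm_sub_tendsto_zero.mp hxt
    have h2 : Tendsto (fun k => ‖y k - g‖) atTop (𝓝 0) :=
      tendsto_iff_norm_sub_tendsto_zero.mp hyt
    have hsum : Tendsto (fun k => ‖x k - f‖ ^ 2 + ‖y k - g‖ ^ 2) atTop (𝓝 0) := by
      have h := (h1.mul h1).add (h2.mul h2)
      simp only [mul_zero, add_zero] at h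
      simpa [pow_two] using h
    have hsqrt : Tendsto (fun k => Real.sqrt (‖x k - f‖ ^ 2 + ‖y k - g‖ ^ 2)) atTop (𝓝 0) := by
      have := (Real.continuous_sqrt.tendsto 0).comp hsum
      simpa [Function.comp_def] using this
    refine hsqrt.congr fun k => ?_
    simp only [gnorm, hsub k]

theorem statement5 (A : H →ₗ.[ℂ] H) (hdense : Dense (A.domain : Set H))
    (hclosed : A.IsClosed)
    (hinj : Function.Injective fun x : A.domain => A x)
    (hsurj : ∀ y : H, ∃ x : A.domain, A x = y)
    (hbdd : ∃ c : ℝ, 0 ≤ c ∧ ∀ y : A.domain, ‖(y : H)‖ ≤ c * ‖A y‖)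
    (g : H) (u : ℕ → H) (hu : IsOrbit A g u)
    (f : H) (hf : f ∈ A.domain) (hAf : A ⟨f, hf⟩ = g) :
    f ∈ graphClosure A (krylov u) ↔ krylovIntersection A u = ({0} : Set H) := by
  classical
  have hiff := graphClosure_iff_liftE hu hf hAf
  set K : Submodule ℂ H := Submodule.span ℂ (Set.range u) with hKdef
  set Q : Submodule ℂ H := Submodule.span ℂ (Set.range fun n => u (n + 1)) with hQdef
  have hkry : krylov u = (K : Set H) := rfl
  have hgK : g ∈ K := by
    rw [← hu.1]; exact Submodule.subset_span ⟨0, rfl⟩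
  have hQK : Q ≤ K := by
    rw [hQdef, Submodule.span_le]
    rintro _ ⟨n, rfl⟩
    exact Submodule.subset_span ⟨n + 1, rfl⟩
  -- the second-component continuous linear map
  set S : WithLp 2 (H × H) →L[ℂ] H := (ContinuousLinearMap.snd ℂ H H).comp
    (WithLp.prodContinuousLinearEquiv 2 ℂ H H).toContinuousLinearMap with hSdef
  constructor
  · -- f ∈ graph closure → trivial Krylov intersection
    intro hfK
    have hF : liftE f g ∈ closure (PE u : Set (WithLp 2 (H × H))) := hiff.mp hfK
    -- g belongs to the closure of Q
    have hgQ : g ∈ closure (Q : Set H) := by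
      have h1 : S (liftE f g) ∈ S '' closure (PE u : Set (WithLp 2 (H × H))) :=
        Set.mem_image_of_mem _ hF
      have h2 : S '' closure (PE u : Set (WithLp 2 (H × H))) ⊆
          closure (S '' (PE u : Set (WithLp 2 (H × H)))) :=
        image_closure_subset_closure_image S.continuous
      have h3 : S '' (PE u : Set (WithLp 2 (H × H))) ⊆ (Q : Set H) := by
        rintro _ ⟨z, hz, rfl⟩
        obtain ⟨a, b, rfl, haK, hbQ, had, hab⟩ := PE_spec hu z hz
        exact hbQ
      exact closure_mono h3 (h2 h1)
    -- the Krylov subspace is contained in the closure of Q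
    have hKQ : (K : Set H) ⊆ closure (Q : Set H) := by
      have hle : K ≤ Q.topologicalClosure := by
        rw [hKdef, Submodule.span_le]
        rintro _ ⟨n, rfl⟩
        cases n with
        | zero =>
            rw [hu.1]
            exact hgQ
        | succ n =>
            exact Q.le_topologicalClosure (Submodule.subset_span ⟨n, rfl⟩)
      intro a ha
      exact hle ha
    rw [Set.eq_singleton_iff_unique_mem]
    constructor
    · -- 0 belongs to the Krylov intersection
      refine ⟨subset_closure (show (0 : H) ∈ krylov u from K.zero_mem), 0,
        A.domain.zero_mem, ⟨A.domain.zero_mem, fun y hy hyd => ?_⟩, A.map_zero⟩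
      rw [show A ⟨(0 : H), A.domain.zero_mem⟩ = 0 from A.map_zero]
      simp
    · -- any element of the Krylov intersection is zero
      rintro w ⟨hwcl, v, hvdom, ⟨hvdom', hperp⟩, hAv⟩
      have hAv' : A ⟨v, hvdom'⟩ = w := hAv
      -- w lies in the closure of Q
      have hwQ : w ∈ closure (Q : Set H) := by
        have : closure (krylov u) ⊆ closure (closure (Q : Set H)) := by
          rw [hkry]; exact closure_mono hKQ
        simpa [closure_closure] using this hwcl
      obtain ⟨z, hzQ, hzw⟩ := mem_closure_iff_seq_limit.mp hwQ
      choose xk hxkdom hAxk hPk using fun k => QE_spec hu (z k) (hzQ k)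
      obtain ⟨c, hc0, hcb⟩ := hbdd
      -- xk converges to v
      have hxkv : Tendsto xk atTop (𝓝 v) := by
        rw [tendsto_iff_norm_sub_tendsto_zero]
        have hb : ∀ k, ‖xk k - v‖ ≤ c * ‖z k - w‖ := by
          intro k
          have h1 := hcb ⟨xk k - v, A.domain.sub_mem (hxkdom k) hvdom'⟩
          have h2 : A ⟨xk k - v, A.domain.sub_mem (hxkdom k) hvdom'⟩ = z k - w :=
            (A.map_sub ⟨xk k, hxkdom k⟩ ⟨v, hvdom'⟩).trans (by rw [hAxk k, hAv'])
          rw [h2] at h1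
          exact h1
        have hcz : Tendsto (fun k => c * ‖z k - w‖) atTop (𝓝 0) := by
          have := (tendsto_iff_norm_sub_tendsto_zero.mp hzw).const_mul c
          simpa using this
        exact squeeze_zero (fun k => norm_nonneg _) hb hcz
      -- the pair (v, w) lies in the closure of PE u
      have heM : liftE v w ∈ closure (PE u : Set (WithLp 2 (H × H))) :=
        mem_closure_of_tendsto (tendsto_liftE hxkv hzw) (Eventually.of_forall fun k => hPk k)
      -- the pair (v, w) is orthogonal to PE u
      have horth : ∀ p ∈ (PE u : Set (WithLp 2 (H × H))), (inner ℂ (liftE v w) p : ℂ) = 0 := by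
        intro p hp
        obtain ⟨a, b, rfl, haK, hbQ, had, hab⟩ := PE_spec hu p hp
        have hpv := hperp a haK had
        rw [inner_liftE, ← hAv', ← hab]
        exact hpv
      have hee : (inner ℂ (liftE v w) (liftE v w) : ℂ) = 0 := by
        have hcl : IsClosed {m : WithLp 2 (H × H) | (inner ℂ (liftE v w) m : ℂ) = 0} :=
          isClosed_eq (continuous_const.inner continuous_id) continuous_const
        exact closure_minimal horth hcl heM
      have he0 : liftE v w = 0 := inner_self_eq_zero.mp hee
      exact congrArg (fun e : WithLp 2 (H × H) =>
        ((WithLp.prodContinuousLinearEquiv 2 ℂ H H) e).2) he0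
  · -- trivial Krylov intersection → f ∈ graph closure
    intro hI
    haveI : CompleteSpace ((PE u).topologicalClosure) :=
      ((PE u).isClosed_topologicalClosure).completeSpace_coe
    obtain ⟨m, hm, e, he, hdecomp⟩ :=
      ((PE u).topologicalClosure).exists_add_mem_mem_orthogonal (liftE f g)
    -- the graph of A, transported to the L² product
    set Gr : Submodule ℂ (WithLp 2 (H × H)) :=
      A.graph.comap (WithLp.linearEquiv 2 ℂ (H × H)).toLinearMap with hGrdef
    have hGrClosed : IsClosed (Gr : Set (WithLp 2 (H × H))) := by
      have hset : (Gr : Set (WithLp 2 (H × H))) =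
          (WithLp.prodContinuousLinearEquiv 2 ℂ H H) ⁻¹' (A.graph : Set (H × H)) := rfl
      rw [hset]
      exact hclosed.preimage (WithLp.prodContinuousLinearEquiv 2 ℂ H H).continuous
    have hPG : PE u ≤ Gr := by
      intro z hz
      obtain ⟨a, b, rfl, haK, hbQ, had, hab⟩ := PE_spec hu z hz
      show ((a, b) : H × H) ∈ A.graph
      exact hab ▸ A.mem_graph ⟨a, had⟩
    have hMG : (PE u).topologicalClosure ≤ Gr :=
      (PE u).topologicalClosure_minimal hPG hGrClosed
    have hFGr : liftE f g ∈ Gr := by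
      show ((f, g) : H × H) ∈ A.graph
      exact hAf ▸ A.mem_graph ⟨f, hf⟩
    have heGr : e ∈ Gr := by
      have hesub : e = liftE f g - m := by rw [hdecomp]; abel
      rw [hesub]
      exact Gr.sub_mem hFGr (hMG hm)
    obtain ⟨vd, hvd1, hvd2⟩ := A.mem_graph_iff.mp heGr
    -- e = liftE vd (A vd)
    have hee : e = liftE (vd : H) (A vd) := by
      rw [hvd1, hvd2]
      rfl
    -- A vd lies in the closure of the Krylov subspace
    have hm2 : S m ∈ closure (K : Set H) := by
      have h1 : S m ∈ S '' closure (PE u : Set (WithLp 2 (H × H))) :=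
        Set.mem_image_of_mem _ hm
      have h2 : S '' closure (PE u : Set (WithLp 2 (H × H))) ⊆
          closure (S '' (PE u : Set (WithLp 2 (H × H)))) :=
        image_closure_subset_closure_image S.continuous
      have h3 : S '' (PE u : Set (WithLp 2 (H × H))) ⊆ (K : Set H) := by
        rintro _ ⟨z, hz, rfl⟩
        obtain ⟨a, b, rfl, haK, hbQ, had, hab⟩ := PE_spec hu z hz
        exact hQK hbQ
      exact closure_mono h3 (h2 h1)
    have hAvd_cl : A vd ∈ closure (krylov u) := by
      have h3 : g ∈ K.topologicalClosure := K.le_topologicalClosure hgK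
      have h2 : S m ∈ K.topologicalClosure := hm2
      have h4 := K.topologicalClosure.sub_mem h3 h2
      have h5 : A vd = g - S m := by
        have : S e = g - S m := by
          have hesub : e = liftE f g - m := by rw [hdecomp]; abel
          rw [hesub, map_sub]
          rfl
        rw [hvd2, ← this]
        rfl
      rw [hkry, h5]
      exact h4
    -- vd is in the graph-orthogonal complement of the Krylov subspace
    have hperp : (vd : H) ∈ perpV A (krylov u) := by
      refine ⟨vd.2, fun y hyK hy => ?_⟩
      obtain ⟨hy', hyP⟩ := mem_PE hu y hyK
      have hyM : liftE y (A ⟨y, hy'⟩) ∈ (PE u).topologicalClosure :=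
        (PE u).le_topologicalClosure hyP
      have h0 : (inner ℂ (liftE y (A ⟨y, hy'⟩)) e : ℂ) = 0 :=
        (Submodule.mem_orthogonal _ e).mp he _ hyM
      rw [hee, inner_liftE] at h0
      have hconj := congrArg (starRingEnd ℂ) h0
      simp only [map_add, inner_conj_symm, map_zero] at hconj
      have hyy : A ⟨y, hy⟩ = A ⟨y, hy'⟩ := rfl
      have hvv : A ⟨(vd : H), vd.2⟩ = A vd := rfl
      rw [hyy, hvv]
      exact hconj
    have hmemI : A vd ∈ krylovIntersection A u :=
      ⟨hAvd_cl, (vd : H), vd.2, hperp, rfl⟩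
    rw [hI] at hmemI
    have hAvd0 : A vd = 0 := hmemI
    have hvd0 : vd = 0 := hinj (by simpa [A.map_zero] using hAvd0)
    have he0 : e = 0 := by
      rw [hee, hvd0, A.map_zero]
      rfl
    rw [he0, add_zero] at hdecomp
    refine hiff.mpr ?_
    rw [hdecomp]
    exact hm

end KrylovPaper
end
end

section
/- Let H be a separable complex Hilbert space, (M_n)_{n∈ℕ} a nested increasing sequence of closed linear subspaces of H (M_n ⊆ M_{n+1} for all n), and M a closed linear subspace such that d̂_w(M_n, M) → 0 as n → ∞. Then M_n ⊆ M for all n ∈ ℕ, the orthogonal complements form a nested decreasing sequence (M_{n+1}^⊥ ⊆ M_n^⊥) with M^⊥ ⊆ M_n^⊥ for all n, and d̂_w(M_n^⊥, M^⊥) → 0 as n → ∞. -/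
open Filter Topology MeasureTheory TopologicalSpace

noncomputable section

namespace KrylovPaper

variable {H : Type*} [NormedAddCommGroup H] [InnerProductSpace ℂ H] [CompleteSpace H]

set_option linter.unusedSectionVars false

variable {v : ℕ → H}

lemma wterm_nonneg (x : H) (n : ℕ) : 0 ≤ (2 : ℝ)⁻¹ ^ (n + 1) * ‖(inner ℂ (v n) x : ℂ)‖ := by
  positivity

lemma wterm_le (hv : ∀ n, v n ∈ Metric.closedBall (0 : H) 1) (x : H) (n : ℕ) :
    (2 : ℝ)⁻¹ ^ (n + 1) * ‖(inner ℂ (v n) x : ℂ)‖ ≤ (2 : ℝ)⁻¹ ^ (n + 1) * ‖x‖ := by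
  have h1 : ‖v n‖ ≤ 1 := by simpa using hv n
  have := norm_inner_le_norm (𝕜 := ℂ) (v n) x
  have h2 : ‖(inner ℂ (v n) x : ℂ)‖ ≤ ‖x‖ := by
    calc ‖(inner ℂ (v n) x : ℂ)‖ ≤ ‖v n‖ * ‖x‖ := this
    _ ≤ 1 * ‖x‖ := by apply mul_le_mul_of_nonneg_right h1 (norm_nonneg _)
    _ = ‖x‖ := one_mul _
  exact mul_le_mul_of_nonneg_left h2 (by positivity)

lemma summable_geom_half : Summable (fun n : ℕ => (2 : ℝ)⁻¹ ^ (n + 1)) := by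
  apply Summable.comp_injective (summable_geometric_of_lt_one (by norm_num) (by norm_num))
    (add_left_injective 1)

lemma tsum_geom_half : (∑' n : ℕ, (2 : ℝ)⁻¹ ^ (n + 1)) = 1 := by
  have h : (∑' n : ℕ, (2 : ℝ)⁻¹ ^ n) = 2 := by
    rw [tsum_geometric_of_lt_one (by norm_num) (by norm_num)]; norm_num
  calc (∑' n : ℕ, (2 : ℝ)⁻¹ ^ (n + 1)) = ∑' n : ℕ, (2:ℝ)⁻¹ * (2:ℝ)⁻¹ ^ n := by
        congr 1; funext n; rw [pow_succ]; ring
  _ = (2:ℝ)⁻¹ * ∑' n : ℕ, (2:ℝ)⁻¹ ^ n := tsum_mul_left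
  _ = 1 := by rw [h]; norm_num

lemma wnorm_summable (hv : ∀ n, v n ∈ Metric.closedBall (0 : H) 1) (x : H) :
    Summable (fun n : ℕ => (2 : ℝ)⁻¹ ^ (n + 1) * ‖(inner ℂ (v n) x : ℂ)‖) := by
  apply Summable.of_nonneg_of_le (wterm_nonneg x) (wterm_le hv x)
  exact summable_geom_half.mul_right _

lemma wnorm_nonneg (x : H) : 0 ≤ wnorm v x :=
  tsum_nonneg (wterm_nonneg x)

lemma wnorm_le_norm (hv : ∀ n, v n ∈ Metric.closedBall (0 : H) 1) (x : H) :
    wnorm v x ≤ ‖x‖ := by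
  have := Summable.tsum_le_tsum (wterm_le hv x) (wnorm_summable hv x) (summable_geom_half.mul_right _)
  calc wnorm v x ≤ ∑' n : ℕ, (2:ℝ)⁻¹ ^ (n+1) * ‖x‖ := this
  _ = (∑' n : ℕ, (2:ℝ)⁻¹ ^ (n+1)) * ‖x‖ := by rw [tsum_mul_right]
  _ = ‖x‖ := by rw [tsum_geom_half, one_mul]

lemma wnorm_triangle (hv : ∀ n, v n ∈ Metric.closedBall (0 : H) 1) (x y : H) :
    wnorm v (x + y) ≤ wnorm v x + wnorm v y := by
  rw [wnorm, wnorm, wnorm, ← Summable.tsum_add (wnorm_summable hv x) (wnorm_summable hv y)]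
  apply Summable.tsum_le_tsum _ (wnorm_summable hv _)
    ((wnorm_summable hv x).add (wnorm_summable hv y))
  intro n
  rw [← mul_add]
  apply mul_le_mul_of_nonneg_left _ (by positivity)
  rw [inner_add_right]
  exact norm_add_le _ _

lemma wnorm_sub_triangle (hv : ∀ n, v n ∈ Metric.closedBall (0 : H) 1) (x y z : H) :
    wnorm v (x - z) ≤ wnorm v (x - y) + wnorm v (y - z) := by
  have : x - z = (x - y) + (y - z) := by abel
  rw [this]; exact wnorm_triangle hv _ _

lemma inner_le_wnorm (hv : ∀ n, v n ∈ Metric.closedBall (0 : H) 1) (x : H) (n : ℕ) :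
    ‖(inner ℂ (v n) x : ℂ)‖ ≤ 2 ^ (n + 1) * wnorm v x := by
  have hs := wnorm_summable hv x
  · have := Summable.le_tsum hs n (fun m _ => wterm_nonneg x m)
    have h2 : (0:ℝ) < (2:ℝ)⁻¹ ^ (n+1) := by positivity
    calc ‖(inner ℂ (v n) x : ℂ)‖ = ((2:ℝ)⁻¹^(n+1))⁻¹ * ((2:ℝ)⁻¹^(n+1) * ‖(inner ℂ (v n) x : ℂ)‖) := by
          field_simp
    _ ≤ ((2:ℝ)⁻¹^(n+1))⁻¹ * wnorm v x := by
          apply mul_le_mul_of_nonneg_left this (by positivity)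
    _ = 2 ^ (n+1) * wnorm v x := by rw [← inv_pow, inv_inv]


lemma norm_inner_le_of_ball (x y : H) (hx : ‖x‖ ≤ 1) : ‖(inner ℂ x y : ℂ)‖ ≤ ‖y‖ := by
  calc ‖(inner ℂ x y : ℂ)‖ ≤ ‖x‖ * ‖y‖ := norm_inner_le_norm x y
  _ ≤ 1 * ‖y‖ := mul_le_mul_of_nonneg_right hx (norm_nonneg _)
  _ = ‖y‖ := one_mul _

/-- approximate any unit-ball vector by some `v n` -/
lemma exists_v_near (hvdense : Metric.closedBall (0 : H) 1 ⊆ closure (Set.range v))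
    {w : H} (hw : ‖w‖ ≤ 1) {δ : ℝ} (hδ : 0 < δ) : ∃ n, ‖w - v n‖ < δ := by
  have hw' : w ∈ closure (Set.range v) := hvdense (by simpa using hw)
  rw [Metric.mem_closure_iff] at hw'
  obtain ⟨b, ⟨n, rfl⟩, hb⟩ := hw' δ hδ
  exact ⟨n, by rwa [dist_eq_norm] at hb⟩

/-- weak-norm convergence to zero implies weak convergence to zero, on bounded sequences -/
lemma tendsto_inner_zero_of_wnorm (hv : ∀ n, v n ∈ Metric.closedBall (0 : H) 1)
    (hvdense : Metric.closedBall (0 : H) 1 ⊆ closure (Set.range v))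
    {x : ℕ → H} {C : ℝ} (hC : ∀ k, ‖x k‖ ≤ C)
    (h : Tendsto (fun k => wnorm v (x k)) atTop (𝓝 0)) (z : H) :
    Tendsto (fun k => ‖(inner ℂ z (x k) : ℂ)‖) atTop (𝓝 0) := by
  have hC0 : 0 ≤ C := le_trans (norm_nonneg _) (hC 0)
  have hvn : ∀ n : ℕ, Tendsto (fun k => ‖(inner ℂ (v n) (x k) : ℂ)‖) atTop (𝓝 0) := by
    intro n
    apply squeeze_zero (fun k => norm_nonneg _) (fun k => inner_le_wnorm hv (x k) n)
    simpa using h.const_mul ((2:ℝ) ^ (n+1))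
  rcases eq_or_ne z 0 with rfl | hz
  · simpa using tendsto_const_nhds
  have hc : 0 < ‖z‖ := norm_pos_iff.2 hz
  set c := ‖z‖ with hcdef
  set w : H := c⁻¹ • z with hwdef
  have hw : ‖w‖ ≤ 1 := by
    rw [hwdef, norm_smul, norm_inv, Real.norm_of_nonneg hc.le, ← hcdef, inv_mul_cancel₀ hc.ne']
  rw [Metric.tendsto_atTop]
  intro ε hε
  have hδ : 0 < ε / (2 * c * (C + 1)) := by positivity
  obtain ⟨n, hn⟩ := exists_v_near hvdense hw hδ
  have := (Metric.tendsto_atTop.1 (hvn n)) (ε / (2 * c)) (by positivity)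
  obtain ⟨N, hN⟩ := this
  refine ⟨N, fun k hk => ?_⟩
  have h1 : ‖(inner ℂ (v n) (x k) : ℂ)‖ < ε / (2 * c) := by
    have := hN k hk
    rwa [Real.dist_eq, sub_zero, abs_of_nonneg (norm_nonneg _)] at this
  have hzw : z = (c : ℂ) • w := by
    rw [Complex.coe_smul, hwdef, smul_smul, mul_inv_cancel₀ hc.ne', one_smul]
  have h2 : ‖(inner ℂ z (x k) : ℂ)‖ = c * ‖(inner ℂ w (x k) : ℂ)‖ := by
    rw [hzw, inner_smul_left, norm_mul, RCLike.norm_conj, Complex.norm_real,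
      Real.norm_of_nonneg hc.le]
  have h3 : ‖(inner ℂ w (x k) : ℂ)‖ ≤ ‖(inner ℂ (v n) (x k) : ℂ)‖ + ‖w - v n‖ * C := by
    have : (inner ℂ w (x k) : ℂ) = inner ℂ (v n) (x k) + inner ℂ (w - v n) (x k) := by
      rw [← inner_add_left]; congr 1; abel
    rw [this]
    refine le_trans (norm_add_le _ _) (add_le_add_right ?_ _)
    calc ‖(inner ℂ (w - v n) (x k) : ℂ)‖ ≤ ‖w - v n‖ * ‖x k‖ := norm_inner_le_norm _ _
    _ ≤ ‖w - v n‖ * C := mul_le_mul_of_nonneg_left (hC k) (norm_nonneg _)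
  rw [Real.dist_eq, sub_zero, abs_of_nonneg (norm_nonneg _), h2]
  have hfin : c * (‖(inner ℂ (v n) (x k) : ℂ)‖ + ‖w - v n‖ * C) < ε := by
    have hb1 : c * ‖(inner ℂ (v n) (x k) : ℂ)‖ < c * (ε / (2 * c)) :=
      mul_lt_mul_of_pos_left h1 hc
    have he1 : c * (ε / (2 * c)) = ε / 2 := by field_simp
    have hb2 : c * (‖w - v n‖ * C) ≤ c * ((ε / (2 * c * (C + 1))) * C) := by
      apply mul_le_mul_of_nonneg_left _ hc.le
      exact mul_le_mul_of_nonneg_right hn.le hC0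
    have he2 : c * ((ε / (2 * c * (C + 1))) * C) < ε / 2 := by
      rw [div_mul_eq_mul_div, mul_div_assoc']
      rw [div_lt_div_iff₀ (by positivity) (by norm_num)]
      ring_nf
      nlinarith [mul_pos hc hε]
    calc c * (‖(inner ℂ (v n) (x k) : ℂ)‖ + ‖w - v n‖ * C)
        = c * ‖(inner ℂ (v n) (x k) : ℂ)‖ + c * (‖w - v n‖ * C) := by ring
    _ < ε / 2 + ε / 2 := by
        apply add_lt_add_of_lt_of_le (he1 ▸ hb1) (le_trans hb2 he2.le)
    _ = ε := by ring
  calc c * ‖(inner ℂ w (x k) : ℂ)‖ ≤ c * (‖(inner ℂ (v n) (x k) : ℂ)‖ + ‖w - v n‖ * C) :=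
        mul_le_mul_of_nonneg_left h3 hc.le
  _ < ε := hfin

/-- pointwise weak convergence to zero implies weak-norm convergence, on bounded sequences -/
lemma wnorm_tendsto_of_inner (hv : ∀ n, v n ∈ Metric.closedBall (0 : H) 1)
    {x : ℕ → H} {C : ℝ} (hC : ∀ k, ‖x k‖ ≤ C)
    (h : ∀ n : ℕ, Tendsto (fun k => ‖(inner ℂ (v n) (x k) : ℂ)‖) atTop (𝓝 0)) :
    Tendsto (fun k => wnorm v (x k)) atTop (𝓝 0) := by
  have hC0 : 0 ≤ C := le_trans (norm_nonneg _) (hC 0)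
  rw [Metric.tendsto_atTop]
  intro ε hε
  -- choose tail cutoff
  obtain ⟨m, hm⟩ := exists_pow_lt_of_lt_one (show (0:ℝ) < ε / (2 * (C + 1)) by positivity)
    (show (2:ℝ)⁻¹ < 1 by norm_num)
  -- tail estimate
  have htail : ∀ k, (∑' i : ℕ, (2:ℝ)⁻¹ ^ (i + m + 1) * ‖(inner ℂ (v (i + m)) (x k) : ℂ)‖)
      ≤ (2:ℝ)⁻¹ ^ m * C := by
    intro k
    have hsum : Summable (fun i : ℕ => (2:ℝ)⁻¹ ^ (i + m + 1) * ‖(inner ℂ (v (i + m)) (x k) : ℂ)‖) := by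
      have := (wnorm_summable hv (x k)).comp_injective (add_left_injective m)
      simpa [Function.comp_def] using this
    have hb : ∀ i : ℕ, (2:ℝ)⁻¹ ^ (i + m + 1) * ‖(inner ℂ (v (i + m)) (x k) : ℂ)‖
        ≤ (2:ℝ)⁻¹ ^ m * ((2:ℝ)⁻¹ ^ (i + 1) * C) := by
      intro i
      have h1 : ‖(inner ℂ (v (i + m)) (x k) : ℂ)‖ ≤ C := by
        refine le_trans (norm_inner_le_of_ball _ _ ?_) (hC k)
        simpa using hv (i + m)
      calc (2:ℝ)⁻¹ ^ (i + m + 1) * ‖(inner ℂ (v (i + m)) (x k) : ℂ)‖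
          ≤ (2:ℝ)⁻¹ ^ (i + m + 1) * C := mul_le_mul_of_nonneg_left h1 (by positivity)
      _ = (2:ℝ)⁻¹ ^ m * ((2:ℝ)⁻¹ ^ (i + 1) * C) := by
            rw [show i + m + 1 = m + (i + 1) from by omega, pow_add]; ring
    calc (∑' i : ℕ, (2:ℝ)⁻¹ ^ (i + m + 1) * ‖(inner ℂ (v (i + m)) (x k) : ℂ)‖)
        ≤ ∑' i : ℕ, (2:ℝ)⁻¹ ^ m * ((2:ℝ)⁻¹ ^ (i + 1) * C) := by
          apply Summable.tsum_le_tsum hb hsum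
          exact (summable_geom_half.mul_right _).mul_left _
    _ = (2:ℝ)⁻¹ ^ m * ((∑' i : ℕ, (2:ℝ)⁻¹ ^ (i + 1)) * C) := by
          rw [tsum_mul_left, tsum_mul_right]
    _ = (2:ℝ)⁻¹ ^ m * C := by rw [tsum_geom_half, one_mul]
  have htail2 : (2:ℝ)⁻¹ ^ m * C < ε / 2 := by
    calc (2:ℝ)⁻¹ ^ m * C ≤ (2:ℝ)⁻¹ ^ m * (C + 1) := by
          apply mul_le_mul_of_nonneg_left (by linarith) (by positivity)
    _ < (ε / (2 * (C + 1))) * (C + 1) := by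
          exact mul_lt_mul_of_pos_right hm (by linarith)
    _ = ε / 2 := by field_simp
  -- head estimate
  have hhead : Tendsto (fun k => ∑ i ∈ Finset.range m, (2:ℝ)⁻¹ ^ (i + 1) * ‖(inner ℂ (v i) (x k) : ℂ)‖)
      atTop (𝓝 0) := by
    have : Tendsto (fun k => ∑ i ∈ Finset.range m, (2:ℝ)⁻¹ ^ (i + 1) * ‖(inner ℂ (v i) (x k) : ℂ)‖)
        atTop (𝓝 (∑ i ∈ Finset.range m, 0)) := by
      apply tendsto_finset_sum
      intro i _
      simpa using (h i).const_mul ((2:ℝ)⁻¹ ^ (i + 1))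
    simpa using this
  obtain ⟨N, hN⟩ := Metric.tendsto_atTop.1 hhead (ε / 2 - (2:ℝ)⁻¹ ^ m * C) (by linarith)
  refine ⟨N, fun k hk => ?_⟩
  have hsplit : wnorm v (x k) = (∑ i ∈ Finset.range m, (2:ℝ)⁻¹ ^ (i + 1) * ‖(inner ℂ (v i) (x k) : ℂ)‖)
      + ∑' i : ℕ, (2:ℝ)⁻¹ ^ (i + m + 1) * ‖(inner ℂ (v (i + m)) (x k) : ℂ)‖ := by
    rw [wnorm, ← (wnorm_summable hv (x k)).sum_add_tsum_nat_add m]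
  have hh := hN k hk
  rw [Real.dist_eq, sub_zero] at hh
  have hh' : (∑ i ∈ Finset.range m, (2:ℝ)⁻¹ ^ (i + 1) * ‖(inner ℂ (v i) (x k) : ℂ)‖)
      < ε / 2 - (2:ℝ)⁻¹ ^ m * C := lt_of_abs_lt hh
  rw [Real.dist_eq, sub_zero, abs_of_nonneg (wnorm_nonneg _), hsplit]
  have := htail k
  linarith

/-- a weak limit of elements of a closed subspace belongs to the subspace -/
lemma mem_of_weak_limit (N : Submodule ℂ H) (hN : IsClosed (N : Set H))
    {x : ℕ → H} (hx : ∀ k, x k ∈ N) {u : H}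
    (h : ∀ z : H, Tendsto (fun k => (inner ℂ z (x k) : ℂ)) atTop (𝓝 (inner ℂ z u))) :
    u ∈ N := by
  haveI : CompleteSpace N := hN.completeSpace_coe
  have hw : u - (N.orthogonalProjection u : H) ∈ Nᗮ :=
    N.sub_starProjection_mem_orthogonal u
  have h0 : ∀ k, (inner ℂ (u - (N.orthogonalProjection u : H)) (x k) : ℂ) = 0 := fun k =>
    (Submodule.mem_orthogonal' N _).1 hw (x k) (hx k)
  have h1 : (inner ℂ (u - (N.orthogonalProjection u : H)) u : ℂ) = 0 := by
    have h2 := h (u - (N.orthogonalProjection u : H))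
    rw [show (fun k => (inner ℂ (u - (N.orthogonalProjection u : H)) (x k) : ℂ))
      = fun _ => (0 : ℂ) from funext h0] at h2
    exact tendsto_nhds_unique h2 tendsto_const_nhds
  have hP : (inner ℂ (u - (N.orthogonalProjection u : H)) ((N.orthogonalProjection u : H)) : ℂ) = 0 :=
    (Submodule.mem_orthogonal' N _).1 hw _ (N.orthogonalProjection u).2
  have h2 : (inner ℂ (u - (N.orthogonalProjection u : H)) (u - (N.orthogonalProjection u : H)) : ℂ) = 0 := by
    rw [inner_sub_right, h1, hP, sub_zero]
  have h3 : u - (N.orthogonalProjection u : H) = 0 := inner_self_eq_zero.1 h2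
  have h4 : u = (N.orthogonalProjection u : H) := by rwa [sub_eq_zero] at h3
  rw [h4]
  exact (N.orthogonalProjection u).2

/-- weak sequential compactness of the closed unit ball -/
lemma weak_seq_compact (hv : ∀ n, v n ∈ Metric.closedBall (0 : H) 1)
    (hvdense : Metric.closedBall (0 : H) 1 ⊆ closure (Set.range v))
    (x : ℕ → H) (hx : ∀ k, ‖x k‖ ≤ 1) :
    ∃ u : H, ‖u‖ ≤ 1 ∧ ∃ φ : ℕ → ℕ, StrictMono φ ∧
      ∀ z : H, Tendsto (fun k => (inner ℂ z (x (φ k)) : ℂ)) atTop (𝓝 (inner ℂ z u)) := by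
  -- Step 1: diagonal extraction via compactness of the product of discs
  set F : ℕ → (ℕ → ℂ) := fun k n => (inner ℂ (v n) (x k) : ℂ) with hF
  have hFs : ∀ k, F k ∈ Set.univ.pi (fun _ : ℕ => Metric.closedBall (0:ℂ) 1) := by
    intro k n _
    rw [Metric.mem_closedBall, dist_zero_right]
    exact norm_inner_le_of_ball _ _ (by simpa using hv n) |>.trans (hx k)
  have hcomp : IsCompact (Set.univ.pi fun _ : ℕ => Metric.closedBall (0:ℂ) 1) :=
    isCompact_univ_pi (fun _ => isCompact_closedBall _ _)
  obtain ⟨a, -, φ, hφ, hconv⟩ := hcomp.tendsto_subseq hFs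
  have hpt : ∀ n : ℕ, Tendsto (fun k => (inner ℂ (v n) (x (φ k)) : ℂ)) atTop (𝓝 (a n)) := by
    rw [tendsto_pi_nhds] at hconv
    exact fun n => hconv n
  -- Step 2: for every z, the sequence of inner products is Cauchy
  have hCauchy : ∀ z : H, CauchySeq (fun k => (inner ℂ (x (φ k)) z : ℂ)) := by
    intro z
    rcases eq_or_ne z 0 with rfl | hz
    · simpa using cauchySeq_const (0 : ℂ)
    have hc : 0 < ‖z‖ := norm_pos_iff.2 hz
    rw [Metric.cauchySeq_iff]
    intro ε hε
    set c := ‖z‖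
    set w : H := c⁻¹ • z with hwdef
    have hw : ‖w‖ ≤ 1 := by
      rw [hwdef, norm_smul, norm_inv, Real.norm_of_nonneg hc.le, inv_mul_cancel₀ hc.ne']
    have hzw : z = (c : ℂ) • w := by
      rw [Complex.coe_smul, hwdef, smul_smul, mul_inv_cancel₀ hc.ne', one_smul]
    obtain ⟨n, hn⟩ := exists_v_near hvdense hw (show (0:ℝ) < ε / (4 * (c + 1)) by positivity)
    have hcs : CauchySeq (fun k => (inner ℂ (v n) (x (φ k)) : ℂ)) := (hpt n).cauchySeq
    obtain ⟨N, hN⟩ := Metric.cauchySeq_iff.1 hcs (ε / (2 * (c + 1))) (by positivity)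
    refine ⟨N, fun j hj k hk => ?_⟩
    have key : ∀ d : H, ‖d‖ ≤ 2 →
        ‖(inner ℂ d z : ℂ)‖ ≤ c * (‖(inner ℂ (v n) d : ℂ)‖ + 2 * (ε / (4 * (c + 1)))) := by
      intro d hd
      have h1 : (inner ℂ d z : ℂ) = (c:ℂ) * inner ℂ d w := by rw [hzw, inner_smul_right]
      have h2 : (inner ℂ d w : ℂ) = inner ℂ d (v n) + inner ℂ d (w - v n) := by
        rw [← inner_add_right]; congr 1; abel
      have h3 : ‖(inner ℂ d (w - v n) : ℂ)‖ ≤ 2 * (ε / (4 * (c + 1))) := by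
        calc ‖(inner ℂ d (w - v n) : ℂ)‖ ≤ ‖d‖ * ‖w - v n‖ := norm_inner_le_norm _ _
        _ ≤ 2 * (ε / (4 * (c + 1))) := by
            apply mul_le_mul hd hn.le (norm_nonneg _) (by norm_num)
      have h4 : ‖(inner ℂ d (v n) : ℂ)‖ = ‖(inner ℂ (v n) d : ℂ)‖ := by
        rw [← inner_conj_symm d (v n), RCLike.norm_conj]
      calc ‖(inner ℂ d z : ℂ)‖ = c * ‖(inner ℂ d w : ℂ)‖ := by
            rw [h1, norm_mul, Complex.norm_real, Real.norm_of_nonneg hc.le]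
      _ ≤ c * (‖(inner ℂ (v n) d : ℂ)‖ + 2 * (ε / (4 * (c + 1)))) := by
            apply mul_le_mul_of_nonneg_left _ hc.le
            rw [h2]
            exact le_trans (norm_add_le _ _) (by rw [h4]; exact add_le_add_right h3 _)
    have hd2 : ‖x (φ j) - x (φ k)‖ ≤ 2 := by
      calc ‖x (φ j) - x (φ k)‖ ≤ ‖x (φ j)‖ + ‖x (φ k)‖ := norm_sub_le _ _
      _ ≤ 2 := by linarith [hx (φ j), hx (φ k)]
    have hkey := key (x (φ j) - x (φ k)) hd2
    have hdist : dist (inner ℂ (x (φ j)) z : ℂ) (inner ℂ (x (φ k)) z : ℂ)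
        = ‖(inner ℂ (x (φ j) - x (φ k)) z : ℂ)‖ := by
      rw [dist_eq_norm, ← inner_sub_left]
    have hvn : ‖(inner ℂ (v n) (x (φ j) - x (φ k)) : ℂ)‖ < ε / (2 * (c + 1)) := by
      rw [inner_sub_right]
      have := hN j hj k hk
      rwa [dist_eq_norm] at this
    rw [hdist]
    calc ‖(inner ℂ (x (φ j) - x (φ k)) z : ℂ)‖
        ≤ c * (‖(inner ℂ (v n) (x (φ j) - x (φ k)) : ℂ)‖ + 2 * (ε / (4 * (c + 1)))) := hkey
    _ < c * (ε / (2 * (c + 1)) + 2 * (ε / (4 * (c + 1)))) := by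
        apply mul_lt_mul_of_pos_left _ hc
        exact add_lt_add_left hvn _
    _ = (c / (c + 1)) * ε := by field_simp; ring
    _ < 1 * ε := by
        apply mul_lt_mul_of_pos_right _ hε
        rw [div_lt_one (by linarith)]; linarith
    _ = ε := one_mul _
  -- Step 3: limits exist, assemble a continuous linear functional
  have hlim : ∀ z : H, ∃ L : ℂ, Tendsto (fun k => (inner ℂ (x (φ k)) z : ℂ)) atTop (𝓝 L) :=
    fun z => cauchySeq_tendsto_of_complete (hCauchy z)
  choose Lf hLf using hlim
  have hadd : ∀ y z : H, Lf (y + z) = Lf y + Lf z := by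
    intro y z
    have h1 : Tendsto (fun k => (inner ℂ (x (φ k)) (y + z) : ℂ)) atTop (𝓝 (Lf y + Lf z)) := by
      have := (hLf y).add (hLf z)
      simpa [inner_add_right] using this
    exact tendsto_nhds_unique (hLf (y + z)) h1
  have hsmul : ∀ (r : ℂ) (z : H), Lf (r • z) = r • Lf z := by
    intro r z
    have h1 : Tendsto (fun k => (inner ℂ (x (φ k)) (r • z) : ℂ)) atTop (𝓝 (r * Lf z)) := by
      have := (hLf z).const_mul r
      simpa [inner_smul_right] using this
    simpa [smul_eq_mul] using tendsto_nhds_unique (hLf (r • z)) h1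
  have hbnd : ∀ z : H, ‖Lf z‖ ≤ 1 * ‖z‖ := by
    intro z
    rw [one_mul]
    apply le_of_tendsto (hLf z).norm
    apply Eventually.of_forall
    intro k
    calc ‖(inner ℂ (x (φ k)) z : ℂ)‖ ≤ ‖x (φ k)‖ * ‖z‖ := norm_inner_le_norm _ _
    _ ≤ 1 * ‖z‖ := mul_le_mul_of_nonneg_right (hx (φ k)) (norm_nonneg _)
    _ = ‖z‖ := one_mul _
  set Lmap : H →ₗ[ℂ] ℂ := { toFun := Lf, map_add' := hadd, map_smul' := hsmul } with hLmap
  set L : H →L[ℂ] ℂ := LinearMap.mkContinuous Lmap 1 hbnd with hL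
  set u : H := (InnerProductSpace.toDual ℂ H).symm L with hu
  have hinner : ∀ z : H, (inner ℂ u z : ℂ) = Lf z := by
    intro z
    rw [hu, InnerProductSpace.toDual_symm_apply]
    rfl
  refine ⟨u, ?_, φ, hφ, ?_⟩
  · have : ‖u‖ = ‖L‖ := by rw [hu]; exact LinearIsometryEquiv.norm_map _ _
    rw [this, hL]
    exact LinearMap.mkContinuous_norm_le _ zero_le_one _
  · intro z
    have h1 : Tendsto (fun k => (starRingEnd ℂ) (inner ℂ (x (φ k)) z : ℂ)) atTop
        (𝓝 ((starRingEnd ℂ) (Lf z))) := (Complex.continuous_conj.tendsto _).comp (hLf z)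
    have h2 : (fun k => (starRingEnd ℂ) (inner ℂ (x (φ k)) z : ℂ))
        = fun k => (inner ℂ z (x (φ k)) : ℂ) := by
      funext k; rw [inner_conj_symm]
    have h3 : (starRingEnd ℂ) (Lf z) = inner ℂ z u := by
      rw [← hinner z, inner_conj_symm]
    rw [h2, h3] at h1
    exact h1

lemma wnorm_zero : wnorm v (0 : H) = 0 := by simp [wnorm]

lemma norm_le_one_of_mem_ball {S : Set H} {x : H}
    (hx : x ∈ S ∩ Metric.closedBall 0 1) : ‖x‖ ≤ 1 := by
  have := hx.2
  rwa [Metric.mem_closedBall, dist_zero_right] at this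

lemma iInf_wnorm_bddBelow (D : Set H) (u : H) :
    BddBelow (Set.range fun w : D => wnorm v (u - (w : H))) := by
  refine ⟨0, ?_⟩
  rintro _ ⟨w, rfl⟩
  exact wnorm_nonneg _

lemma iInf_wnorm_nonneg (D : Set H) (u : H) :
    0 ≤ ⨅ w : D, wnorm v (u - (w : H)) :=
  Real.iInf_nonneg (fun _ => wnorm_nonneg _)

lemma iInf_wnorm_le {D : Set H} (u : H) {w₀ : H} (hw : w₀ ∈ D) :
    (⨅ w : D, wnorm v (u - (w : H))) ≤ wnorm v (u - w₀) :=
  ciInf_le (iInf_wnorm_bddBelow D u) ⟨w₀, hw⟩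

lemma dw_nonneg (C D : Set H) : 0 ≤ dw v C D :=
  Real.iSup_nonneg (fun u => iInf_wnorm_nonneg D u)

lemma dw_le {C D : Set H} {b : ℝ}
    (h : ∀ u ∈ C, (⨅ w : D, wnorm v (u - (w : H))) ≤ b) (hb : 0 ≤ b) :
    dw v C D ≤ b :=
  Real.iSup_le (fun u => h u u.2) hb

lemma le_dw (hv : ∀ n, v n ∈ Metric.closedBall (0 : H) 1) {C D : Set H}
    (hC : ∀ u ∈ C, ‖u‖ ≤ 1) (hD : (0 : H) ∈ D) {u : H} (hu : u ∈ C) :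
    (⨅ w : D, wnorm v (u - (w : H))) ≤ dw v C D := by
  apply le_ciSup (f := fun u : C => ⨅ w : D, wnorm v ((u : H) - (w : H))) _ ⟨u, hu⟩
  refine ⟨1, ?_⟩
  rintro _ ⟨z, rfl⟩
  calc (⨅ w : D, wnorm v ((z : H) - (w : H))) ≤ wnorm v ((z : H) - 0) := iInf_wnorm_le _ hD
  _ = wnorm v (z : H) := by rw [sub_zero]
  _ ≤ ‖(z : H)‖ := wnorm_le_norm hv _
  _ ≤ 1 := hC _ z.2

lemma dw_eq_zero_of_subset {C D : Set H} (h : C ⊆ D) : dw v C D = 0 := by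
  apply le_antisymm _ (dw_nonneg C D)
  apply dw_le _ le_rfl
  intro u hu
  calc (⨅ w : D, wnorm v (u - (w : H))) ≤ wnorm v (u - u) := iInf_wnorm_le _ (h hu)
  _ = 0 := by rw [sub_self, wnorm_zero]

lemma zero_mem_ball (N : Submodule ℂ H) :
    (0 : H) ∈ (N : Set H) ∩ Metric.closedBall 0 1 :=
  ⟨N.zero_mem, by simp⟩

lemma tendsto_one_div_nat : Tendsto (fun k : ℕ => 1 / ((k : ℝ) + 1)) atTop (𝓝 0) :=
  tendsto_one_div_add_atTop_nhds_zero_nat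

lemma part_four (hv : ∀ n, v n ∈ Metric.closedBall (0 : H) 1)
    (hvdense : Metric.closedBall (0 : H) 1 ⊆ closure (Set.range v))
    (M : Submodule ℂ H)
    (Mn : ℕ → Submodule ℂ H)
    (hmono : ∀ n, Mn n ≤ Mn (n + 1))
    (hconv : Tendsto (fun n => dhatSub v (Mn n) M) atTop (𝓝 0))
    (hsub : ∀ n, Mn n ≤ M) :
    Tendsto (fun n => dhatSub v (Mn n)ᗮ Mᗮ) atTop (𝓝 0) := by
  have hchain : ∀ {a b : ℕ}, a ≤ b → Mn a ≤ Mn b := fun {a b} h =>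
    monotone_nat_of_le_succ hmono h
  have horthle : ∀ n, Mᗮ ≤ (Mn n)ᗮ := fun n => Submodule.orthogonal_le (hsub n)
  set bl : Submodule ℂ H → Set H := fun N => (N : Set H) ∩ Metric.closedBall 0 1 with hbl
  set A : ℕ → ℝ := fun n => dw v (bl (Mn n)ᗮ) (bl Mᗮ) with hA
  have hzero : ∀ n, dw v (bl Mᗮ) (bl ((Mn n)ᗮ)) = 0 := by
    intro n
    apply dw_eq_zero_of_subset
    intro x hx
    exact ⟨horthle n hx.1, hx.2⟩
  have hAeq : (fun n => dhatSub v (Mn n)ᗮ Mᗮ) = A := by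
    funext n
    show dhatSub v (Mn n)ᗮ Mᗮ = A n
    unfold dhatSub dhat
    rw [hA]
    show max (dw v (bl (Mn n)ᗮ) (bl Mᗮ)) (dw v (bl Mᗮ) (bl (Mn n)ᗮ)) = _
    rw [hzero n]
    exact max_eq_left (dw_nonneg _ _)
  rw [hAeq]
  by_contra hcon
  rw [Metric.tendsto_atTop] at hcon
  push_neg at hcon
  obtain ⟨ε, hε, hfreq⟩ := hcon
  have hfreq' : ∃ᶠ n in atTop, ε ≤ A n := by
    rw [frequently_atTop]
    intro N
    obtain ⟨n, hn1, hn2⟩ := hfreq N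
    refine ⟨n, hn1, ?_⟩
    rwa [Real.dist_eq, sub_zero, abs_of_nonneg (dw_nonneg _ _)] at hn2
  obtain ⟨φ, hφ, hφε⟩ := extraction_of_frequently_atTop hfreq'
  have hpick : ∀ k : ℕ, ∃ u : (bl ((Mn (φ k))ᗮ) : Set H),
      ε / 2 < ⨅ w : (bl Mᗮ : Set H), wnorm v ((u : H) - (w : H)) := by
    intro k
    haveI : Nonempty (bl ((Mn (φ k))ᗮ) : Set H) := ⟨⟨0, zero_mem_ball _⟩⟩
    apply exists_lt_of_lt_ciSup
    calc ε / 2 < ε := by linarith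
    _ ≤ A (φ k) := hφε k
  choose s hs using hpick
  have hxnorm : ∀ k, ‖(s k : H)‖ ≤ 1 := fun k => norm_le_one_of_mem_ball (s k).2
  have hxmem : ∀ k, (s k : H) ∈ (Mn (φ k))ᗮ := fun k => (s k).2.1
  obtain ⟨u, hu1, ψ, hψ, hconv2⟩ := weak_seq_compact hv hvdense (fun k => (s k : H)) hxnorm
  -- the weak limit is orthogonal to every `Mn m`
  have horth : ∀ m, u ∈ (Mn m)ᗮ := by
    intro m
    rw [Submodule.mem_orthogonal]
    intro y hy
    have hev : ∀ᶠ k in atTop, (inner ℂ y ((s (ψ k)) : H) : ℂ) = 0 := by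
      rw [eventually_atTop]
      refine ⟨m, fun k hk => ?_⟩
      have hle : m ≤ φ (ψ k) := le_trans hk (le_trans hψ.le_apply hφ.le_apply)
      exact (Submodule.mem_orthogonal _ _).1 (hxmem (ψ k)) y (hchain hle hy)
    have h0 : Tendsto (fun k => (inner ℂ y ((s (ψ k)) : H) : ℂ)) atTop (𝓝 0) :=
      Tendsto.congr' (by filter_upwards [hev] with k h using h.symm) tendsto_const_nhds
    exact tendsto_nhds_unique (hconv2 y) h0
  -- the weak limit is orthogonal to `M`
  have huM : u ∈ Mᗮ := by
    rw [Submodule.mem_orthogonal]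
    intro y hy
    rcases eq_or_ne y 0 with rfl | hy0
    · simp
    have hny : 0 < ‖y‖ := norm_pos_iff.2 hy0
    set y' : H := (‖y‖ : ℂ)⁻¹ • y with hy'def
    have hy'M : y' ∈ M := M.smul_mem _ hy
    have hy'n : ‖y'‖ ≤ 1 := by
      rw [hy'def, norm_smul, norm_inv, Complex.norm_real, Real.norm_of_nonneg hny.le,
        inv_mul_cancel₀ hny.ne']
    have hDW : Tendsto (fun m => dw v (bl M) (bl (Mn m))) atTop (𝓝 0) := by
      apply squeeze_zero (fun m => dw_nonneg _ _) _ hconv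
      intro m
      unfold dhatSub dhat
      exact le_max_right _ _
    have hpick2 : ∀ m : ℕ, ∃ t : (bl (Mn m) : Set H),
        wnorm v (y' - (t : H)) < dw v (bl M) (bl (Mn m)) + 1 / ((m : ℝ) + 1) := by
      intro m
      haveI : Nonempty (bl (Mn m) : Set H) := ⟨⟨0, zero_mem_ball _⟩⟩
      apply exists_lt_of_ciInf_lt
      have h1 : (⨅ w : (bl (Mn m) : Set H), wnorm v (y' - (w : H))) ≤ dw v (bl M) (bl (Mn m)) := by
        apply le_dw hv (fun z hz => norm_le_one_of_mem_ball hz) (zero_mem_ball _)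
        exact ⟨hy'M, by rwa [Metric.mem_closedBall, dist_zero_right]⟩
      have h2 : (0:ℝ) < 1 / ((m : ℝ) + 1) := by positivity
      linarith
    choose t ht using hpick2
    have httnorm : Tendsto (fun m => wnorm v (y' - (t m : H))) atTop (𝓝 0) := by
      apply squeeze_zero (fun m => wnorm_nonneg _) (fun m => (ht m).le)
      simpa using hDW.add tendsto_one_div_nat
    have hbnd2 : ∀ m, ‖y' - (t m : H)‖ ≤ 2 := by
      intro m
      calc ‖y' - (t m : H)‖ ≤ ‖y'‖ + ‖(t m : H)‖ := norm_sub_le _ _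
      _ ≤ 2 := by linarith [norm_le_one_of_mem_ball (t m).2]
    have hweak2 := tendsto_inner_zero_of_wnorm hv hvdense hbnd2 httnorm u
    have hconst : ∀ m, (inner ℂ u (y' - (t m : H)) : ℂ) = inner ℂ u y' := by
      intro m
      rw [inner_sub_right]
      have h0 : (inner ℂ u ((t m : H)) : ℂ) = 0 := by
        have h00 := (Submodule.mem_orthogonal (Mn m) u).1 (horth m) ((t m : H)) (t m).2.1
        rw [← inner_conj_symm, h00, map_zero]
      rw [h0, sub_zero]
    have hcc : Tendsto (fun _ : ℕ => ‖(inner ℂ u y' : ℂ)‖) atTop (𝓝 0) := by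
      refine hweak2.congr (fun m => ?_)
      rw [hconst m]
    have h00 : ‖(inner ℂ u y' : ℂ)‖ = 0 := tendsto_nhds_unique tendsto_const_nhds hcc
    have hy'0 : (inner ℂ u y' : ℂ) = 0 := norm_eq_zero.1 h00
    have hyu : (inner ℂ u y : ℂ) = 0 := by
      have hsc : (inner ℂ u ((‖y‖ : ℂ) • y') : ℂ) = 0 := by rw [inner_smul_right, hy'0, mul_zero]
      rwa [hy'def, smul_smul, mul_inv_cancel₀ (by exact_mod_cast hny.ne'), one_smul] at hsc
    rw [← inner_conj_symm, hyu, map_zero]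
  -- contradiction
  have humem : u ∈ (bl Mᗮ : Set H) := ⟨huM, by rwa [Metric.mem_closedBall, dist_zero_right]⟩
  have hfin : Tendsto (fun k => wnorm v ((s (ψ k) : H) - u)) atTop (𝓝 0) := by
    apply wnorm_tendsto_of_inner hv (C := 2)
    · intro k
      calc ‖(s (ψ k) : H) - u‖ ≤ ‖(s (ψ k) : H)‖ + ‖u‖ := norm_sub_le _ _
      _ ≤ 2 := by linarith [hxnorm (ψ k)]
    · intro n
      have h1' := Filter.Tendsto.sub (hconv2 (v n))
        (tendsto_const_nhds (x := (inner ℂ (v n) u : ℂ)) (f := atTop))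
      have h1 : Tendsto (fun k => (inner ℂ (v n) ((s (ψ k)) : H) : ℂ) - inner ℂ (v n) u) atTop
          (𝓝 0) := by
        simpa using h1'
      rw [show (fun k => ‖(inner ℂ (v n) ((s (ψ k) : H) - u) : ℂ)‖)
        = fun k => ‖(inner ℂ (v n) ((s (ψ k)) : H) : ℂ) - inner ℂ (v n) u‖ from
        funext fun k => by rw [inner_sub_right]]
      simpa using h1.norm
  obtain ⟨K, hK⟩ := Metric.tendsto_atTop.1 hfin (ε / 2) (by linarith)
  have h1 := hs (ψ K)
  have h2 : (⨅ w : (bl Mᗮ : Set H), wnorm v ((s (ψ K) : H) - (w : H)))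
      ≤ wnorm v ((s (ψ K) : H) - u) := iInf_wnorm_le _ humem
  have h3 := hK K le_rfl
  rw [Real.dist_eq, sub_zero, abs_of_nonneg (wnorm_nonneg _)] at h3
  linarith

lemma part_one (hv : ∀ n, v n ∈ Metric.closedBall (0 : H) 1)
    (hvdense : Metric.closedBall (0 : H) 1 ⊆ closure (Set.range v))
    (M : Submodule ℂ H) (hM : IsClosed (M : Set H))
    (Mn : ℕ → Submodule ℂ H)
    (hmono : ∀ n, Mn n ≤ Mn (n + 1))
    (hconv : Tendsto (fun n => dhatSub v (Mn n) M) atTop (𝓝 0)) :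
    ∀ n, Mn n ≤ M := by
  have hchain : ∀ {a b : ℕ}, a ≤ b → Mn a ≤ Mn b := fun {a b} h =>
    monotone_nat_of_le_succ hmono h
  intro n x hx
  rcases eq_or_ne x 0 with rfl | hx0
  · exact M.zero_mem
  have hnx : 0 < ‖x‖ := norm_pos_iff.2 hx0
  set y : H := (‖x‖ : ℂ)⁻¹ • x with hydef
  have hyMn : y ∈ Mn n := (Mn n).smul_mem _ hx
  have hyn : ‖y‖ ≤ 1 := by
    rw [hydef, norm_smul, norm_inv, Complex.norm_real, Real.norm_of_nonneg hnx.le,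
      inv_mul_cancel₀ hnx.ne']
  set δ := ⨅ w : ((M : Set H) ∩ Metric.closedBall 0 1 : Set H), wnorm v (y - (w : H)) with hδ
  have hδ0 : δ = 0 := by
    apply le_antisymm _ (iInf_wnorm_nonneg _ _)
    apply ge_of_tendsto hconv
    rw [eventually_atTop]
    refine ⟨n, fun m hm => ?_⟩
    have hymem : y ∈ (Mn m : Set H) ∩ Metric.closedBall 0 1 :=
      ⟨hchain hm hyMn, by rwa [Metric.mem_closedBall, dist_zero_right]⟩
    calc δ ≤ dw v ((Mn m : Set H) ∩ Metric.closedBall 0 1) ((M : Set H) ∩ Metric.closedBall 0 1) :=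
          le_dw hv (fun u hu => norm_le_one_of_mem_ball hu) (zero_mem_ball M) hymem
    _ ≤ dhatSub v (Mn m) M := le_max_left _ _
  haveI : Nonempty (((M : Set H) ∩ Metric.closedBall 0 1 : Set H)) := ⟨⟨0, zero_mem_ball M⟩⟩
  have hex : ∀ k : ℕ, ∃ w : ((M : Set H) ∩ Metric.closedBall 0 1 : Set H),
      wnorm v (y - (w : H)) < 1 / ((k : ℝ) + 1) := by
    intro k
    apply exists_lt_of_ciInf_lt
    rw [← hδ, hδ0]
    positivity
  choose w hw using hex
  have hwnorm : Tendsto (fun k => wnorm v (y - (w k : H))) atTop (𝓝 0) :=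
    squeeze_zero (fun k => wnorm_nonneg _) (fun k => (hw k).le) tendsto_one_div_nat
  have hbound : ∀ k, ‖y - (w k : H)‖ ≤ 2 := by
    intro k
    calc ‖y - (w k : H)‖ ≤ ‖y‖ + ‖(w k : H)‖ := norm_sub_le _ _
    _ ≤ 2 := by linarith [norm_le_one_of_mem_ball (w k).2]
  have hweak := tendsto_inner_zero_of_wnorm hv hvdense hbound hwnorm
  have hyM : y ∈ M := by
    apply mem_of_weak_limit M hM (x := fun k => (w k : H)) (fun k => (w k).2.1)
    intro z
    have h1 : Tendsto (fun k => (inner ℂ z (y - (w k : H)) : ℂ)) atTop (𝓝 0) := by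
      rw [tendsto_zero_iff_norm_tendsto_zero]
      exact hweak z
    have h2 : (fun k => (inner ℂ z (w k : H) : ℂ))
        = fun k => (inner ℂ z y : ℂ) - inner ℂ z (y - (w k : H)) := by
      funext k; rw [inner_sub_right]; ring
    rw [h2]
    simpa using (tendsto_const_nhds (x := (inner ℂ z y : ℂ))).sub h1
  have : (‖x‖ : ℂ) • y ∈ M := M.smul_mem _ hyM
  rwa [hydef, smul_smul, mul_inv_cancel₀ (by exact_mod_cast hnx.ne'), one_smul] at this


theorem statement10 [SeparableSpace H]
    (v : ℕ → H) (hv : ∀ n, v n ∈ Metric.closedBall (0 : H) 1)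
    (hvdense : Metric.closedBall (0 : H) 1 ⊆ closure (Set.range v))
    (M : Submodule ℂ H) (hM : IsClosed (M : Set H))
    (Mn : ℕ → Submodule ℂ H) (hMn : ∀ n, IsClosed ((Mn n : Set H)))
    (hmono : ∀ n, Mn n ≤ Mn (n + 1))
    (hconv : Tendsto (fun n => dhatSub v (Mn n) M) atTop (𝓝 0)) :
    (∀ n, Mn n ≤ M) ∧ (∀ n, (Mn (n + 1))ᗮ ≤ (Mn n)ᗮ) ∧ (∀ n, Mᗮ ≤ (Mn n)ᗮ) ∧
      Tendsto (fun n => dhatSub v (Mn n)ᗮ Mᗮ) atTop (𝓝 0) := by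
  have h1 : ∀ n, Mn n ≤ M := part_one hv hvdense M hM Mn hmono hconv
  exact ⟨h1, fun n => Submodule.orthogonal_le (hmono n),
    fun n => Submodule.orthogonal_le (h1 n),
    part_four hv hvdense M Mn hmono hconv h1⟩

end KrylovPaper
end
end

section
/- Let A be a self-adjoint operator in a complex Hilbert space H and let g ∈ C∞(A) be of the bounded class with respect to A, i.e. there exists B > 0 with ‖A^n g‖ ≤ B^n for all n ∈ ℕ. Then K(A,g)^{⊥V} ⊆ K(A,g)^⊥ and A(K(A,g)^{⊥V}) ⊆ K(A,g)^⊥. -/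
open Filter Topology MeasureTheory TopologicalSpace

noncomputable section

namespace KrylovPaper

variable {H : Type*} [NormedAddCommGroup H] [InnerProductSpace ℂ H] [CompleteSpace H]

private theorem aux_pow_le (a b C : ℝ) (hb : 0 < b)
    (h : ∀ k : ℕ, a ^ (2 ^ k) ≤ C * b ^ (2 ^ k)) : a ≤ b := by
  by_contra hab
  push_neg at hab
  have h1 : 1 < a / b := (one_lt_div hb).mpr hab
  obtain ⟨n, hn⟩ := pow_unbounded_of_one_lt C h1
  have h2 : (a / b) ^ n ≤ (a / b) ^ (2 ^ n) :=
    pow_le_pow_right₀ h1.le (Nat.le_of_lt (Nat.lt_two_pow_self (n := n)))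
  have h3 : a ^ (2 ^ n) ≤ C * b ^ (2 ^ n) := h n
  have hbp : (0 : ℝ) < b ^ (2 ^ n) := pow_pos hb _
  simp only [div_pow] at h2 hn
  have h4 : C * b ^ (2 ^ n) < a ^ (2 ^ n) := by
    calc C * b ^ (2 ^ n) < a ^ (2 ^ n) / b ^ (2 ^ n) * b ^ (2 ^ n) :=
          mul_lt_mul_of_pos_right (lt_of_lt_of_le hn h2) hbp
      _ = a ^ (2 ^ n) := div_mul_cancel₀ _ hbp.ne'
  linarith

private theorem conj_mul' (z : ℂ) : (starRingEnd ℂ) z * z = (‖z‖ : ℂ) * (‖z‖ : ℂ) :=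
  (RCLike.conj_mul z).trans (by rw [sq]; rfl)

private theorem aux_cs (p q r : ℝ)
    (h : ∀ t : ℝ, 0 ≤ p * t ^ 2 + 2 * r * t + q) : r ^ 2 ≤ p * q := by
  have hd := discrim_le_zero (a := p) (b := 2 * r) (c := q) (fun t => by nlinarith [h t])
  rw [discrim] at hd
  nlinarith

open Classical in
/-- Apply a `LinearPMap` as a plain function, with junk value `0` outside the domain. -/
private noncomputable def opApply (A : H →ₗ.[ℂ] H) : H → H := fun w =>
  if h : w ∈ A.domain then A ⟨w, h⟩ else 0

private theorem opApply_eq (A : H →ₗ.[ℂ] H) {w : H} (h : w ∈ A.domain) :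
    opApply A w = A ⟨w, h⟩ := dif_pos h

set_option maxHeartbeats 1000000 in
theorem statement14 (A : H →ₗ.[ℂ] H) (hsa : IsSelfAdjoint A)
    (g : H) (u : ℕ → H) (hu : IsOrbit A g u)
    (B : ℝ) (hB : 0 < B) (hbdd : ∀ n : ℕ, 1 ≤ n → ‖u n‖ ≤ B ^ n) :
    perpV A (krylov u) ⊆ ((Submodule.span ℂ (Set.range u))ᗮ : Set H) ∧
    opImage A (perpV A (krylov u)) ⊆ ((Submodule.span ℂ (Set.range u))ᗮ : Set H) := by
  have hdense : Dense (A.domain : Set H) := hsa.dense_domain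
  have hsymm : ∀ x y : A.domain, (inner ℂ (A x) (y : H) : ℂ) = inner ℂ (x : H) (A y) := by
    have h := LinearPMap.adjoint_isFormalAdjoint (T := A) hdense
    rw [LinearPMap.isSelfAdjoint_def] at hsa
    rw [hsa] at h
    exact h
  set K : Submodule ℂ H := Submodule.span ℂ (Set.range u) with hKdef
  have huK : ∀ n, u n ∈ K := fun n => Submodule.subset_span ⟨n, rfl⟩
  have hKdom : ∀ w ∈ K, w ∈ A.domain := fun w hw =>
    Submodule.span_le.mpr (Set.range_subset_iff.mpr fun n => (hu.2 n).elim fun h _ => h) hw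
  set f : H → H := opApply A with hfdef
  have hf_eq : ∀ (w : H) (h : w ∈ A.domain), f w = A ⟨w, h⟩ := fun w h => opApply_eq A h
  have hfu : ∀ n, f (u n) = u (n + 1) := by
    intro n
    obtain ⟨h, he⟩ := hu.2 n
    rw [hf_eq (u n) h]
    exact he
  have hf0 : f 0 = 0 := by
    rw [hf_eq 0 A.domain.zero_mem]
    exact A.toFun.map_zero
  have hf_add : ∀ v w, v ∈ A.domain → w ∈ A.domain → f (v + w) = f v + f w := by
    intro v w hv hw
    rw [hf_eq v hv, hf_eq w hw, hf_eq (v + w) (A.domain.add_mem hv hw)]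
    exact A.map_add ⟨v, hv⟩ ⟨w, hw⟩
  have hf_smul : ∀ (c : ℂ) (v), v ∈ A.domain → f (c • v) = c • f v := by
    intro c v hv
    rw [hf_eq v hv, hf_eq (c • v) (A.domain.smul_mem c hv)]
    exact A.map_smul c ⟨v, hv⟩
  have hfK : ∀ w ∈ K, f w ∈ K := by
    intro w hw
    induction hw using Submodule.span_induction with
    | mem y hy =>
      obtain ⟨n, rfl⟩ := hy
      rw [hfu n]; exact huK (n + 1)
    | zero => rw [hf0]; exact K.zero_mem
    | add a b ha hb iha ihb =>
      rw [hf_add a b (hKdom a ha) (hKdom b hb)]; exact K.add_mem iha ihb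
    | smul c a ha ih =>
      rw [hf_smul c a (hKdom a ha)]; exact K.smul_mem c ih
  have hfsymm : ∀ v w, v ∈ A.domain → w ∈ A.domain →
      (inner ℂ (f v) w : ℂ) = inner ℂ v (f w) := by
    intro v w hv hw
    rw [hf_eq v hv, hf_eq w hw]
    exact hsymm ⟨v, hv⟩ ⟨w, hw⟩
  have hiterK : ∀ w ∈ K, ∀ m, f^[m] w ∈ K := by
    intro w hw m
    induction m with
    | zero => simpa using hw
    | succ m ih => rw [Function.iterate_succ_apply']; exact hfK _ ih
  have hiter0 : ∀ m, f^[m] (0 : H) = 0 := by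
    intro m
    induction m with
    | zero => rfl
    | succ m ih => rw [Function.iterate_succ_apply', ih, hf0]
  have hiter_add : ∀ v w, v ∈ K → w ∈ K → ∀ m, f^[m] (v + w) = f^[m] v + f^[m] w := by
    intro v w hv hw m
    induction m with
    | zero => rfl
    | succ m ih =>
      rw [Function.iterate_succ_apply', Function.iterate_succ_apply',
        Function.iterate_succ_apply', ih,
        hf_add _ _ (hKdom _ (hiterK v hv m)) (hKdom _ (hiterK w hw m))]
  have hiter_smul : ∀ (c : ℂ) (v), v ∈ K → ∀ m, f^[m] (c • v) = c • f^[m] v := by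
    intro c v hv m
    induction m with
    | zero => rfl
    | succ m ih =>
      rw [Function.iterate_succ_apply', Function.iterate_succ_apply', ih,
        hf_smul c _ (hKdom _ (hiterK v hv m))]
  have hiter_u : ∀ n m, f^[m] (u n) = u (n + m) := by
    intro n m
    induction m with
    | zero => rfl
    | succ m ih => rw [Function.iterate_succ_apply', ih, hfu]; rfl
  have hmove : ∀ v, v ∈ K → ∀ (i) (w), w ∈ K →
      (inner ℂ (f^[i] v) w : ℂ) = inner ℂ v (f^[i] w) := by
    intro v hv i
    induction i with
    | zero => intro w _; rfl
    | succ i ih =>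
      intro w hw
      rw [Function.iterate_succ_apply', Function.iterate_succ_apply,
        hfsymm (f^[i] v) w (hKdom _ (hiterK v hv i)) (hKdom w hw)]
      exact ih (f w) (hfK w hw)
  have hgrow : ∀ w ∈ K, ∃ C : ℝ, 0 ≤ C ∧ ∀ m, ‖f^[m] w‖ ≤ C * B ^ m := by
    intro w hw
    induction hw using Submodule.span_induction with
    | mem y hy =>
      obtain ⟨n, rfl⟩ := hy
      refine ⟨B ^ n + ‖u 0‖, by positivity, fun m => ?_⟩
      rw [hiter_u n m]
      rcases Nat.eq_zero_or_pos (n + m) with h0 | h1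
      · obtain ⟨hn0, hm0⟩ := Nat.add_eq_zero.mp h0
        subst hn0; subst hm0
        simp only [pow_zero, mul_one]
        linarith [norm_nonneg (u 0)]
      · calc ‖u (n + m)‖ ≤ B ^ (n + m) := hbdd _ h1
          _ = B ^ n * B ^ m := pow_add B n m
          _ ≤ (B ^ n + ‖u 0‖) * B ^ m := by
              have := norm_nonneg (u 0)
              have := pow_nonneg hB.le m
              nlinarith
    | zero =>
      exact ⟨0, le_refl _, fun m => by rw [hiter0 m]; simp⟩
    | add a b ha hb iha ihb =>
      obtain ⟨C1, hC1, h1⟩ := iha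
      obtain ⟨C2, hC2, h2⟩ := ihb
      refine ⟨C1 + C2, by linarith, fun m => ?_⟩
      rw [hiter_add a b ha hb m]
      calc ‖f^[m] a + f^[m] b‖ ≤ ‖f^[m] a‖ + ‖f^[m] b‖ := norm_add_le _ _
        _ ≤ C1 * B ^ m + C2 * B ^ m := add_le_add (h1 m) (h2 m)
        _ = (C1 + C2) * B ^ m := by ring
    | smul c a ha ih =>
      obtain ⟨C, hC, h⟩ := ih
      refine ⟨‖c‖ * C, by positivity, fun m => ?_⟩
      rw [hiter_smul c a ha m, norm_smul]
      calc ‖c‖ * ‖f^[m] a‖ ≤ ‖c‖ * (C * B ^ m) :=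
            mul_le_mul_of_nonneg_left (h m) (norm_nonneg c)
        _ = ‖c‖ * C * B ^ m := by ring
  have hsq : ∀ w ∈ K, ∀ j, ‖f^[j] w‖ ^ 2 ≤ ‖w‖ * ‖f^[j + j] w‖ := by
    intro w hw j
    have h1 : (inner ℂ (f^[j] w) (f^[j] w) : ℂ) = inner ℂ w (f^[j + j] w) := by
      rw [Function.iterate_add_apply f j j w]
      exact hmove w hw j (f^[j] w) (hiterK w hw j)
    calc ‖f^[j] w‖ ^ 2 = ‖(inner ℂ (f^[j] w) (f^[j] w) : ℂ)‖ := by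
          rw [inner_self_eq_norm_sq_to_K]
          simp
      _ = ‖(inner ℂ w (f^[j + j] w) : ℂ)‖ := by rw [h1]
      _ ≤ ‖w‖ * ‖f^[j + j] w‖ := norm_inner_le_norm _ _
  have hCSpow : ∀ v ∈ K, ∀ k, ‖f v‖ ^ 2 ^ k ≤ ‖v‖ ^ (2 ^ k - 1) * ‖f^[2 ^ k] v‖ := by
    intro v hv k
    induction k with
    | zero => simp
    | succ k ih =>
      have h2 : ‖f^[2 ^ k] v‖ ^ 2 ≤ ‖v‖ * ‖f^[2 ^ k + 2 ^ k] v‖ := hsq v hv (2 ^ k)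
      have e1 : (2 : ℕ) ^ (k + 1) = 2 ^ k + 2 ^ k := by rw [pow_succ]; ring
      have e2 : (2 : ℕ) ^ (k + 1) - 1 = 2 * (2 ^ k - 1) + 1 := by
        have : 1 ≤ (2 : ℕ) ^ k := Nat.one_le_two_pow
        omega
      calc ‖f v‖ ^ 2 ^ (k + 1) = (‖f v‖ ^ 2 ^ k) ^ 2 := by
            rw [← pow_mul, pow_succ]
        _ ≤ (‖v‖ ^ (2 ^ k - 1) * ‖f^[2 ^ k] v‖) ^ 2 := by
            apply pow_le_pow_left₀ (by positivity) ih
        _ = ‖v‖ ^ (2 * (2 ^ k - 1)) * ‖f^[2 ^ k] v‖ ^ 2 := by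
            rw [mul_pow, ← pow_mul, mul_comm (2 ^ k - 1) 2]
        _ ≤ ‖v‖ ^ (2 * (2 ^ k - 1)) * (‖v‖ * ‖f^[2 ^ k + 2 ^ k] v‖) :=
            mul_le_mul_of_nonneg_left h2 (by positivity)
        _ = ‖v‖ ^ (2 ^ (k + 1) - 1) * ‖f^[2 ^ (k + 1)] v‖ := by
            have e3 : 2 * (2 ^ k - 1) + 1 = 2 ^ k + 2 ^ k - 1 := by
              have : 1 ≤ (2 : ℕ) ^ k := Nat.one_le_two_pow
              omega
            rw [e1, ← e3, pow_succ]
            ring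
  have hbound1 : ∀ v ∈ K, ‖f v‖ ≤ B * ‖v‖ := by
    intro v hv
    by_cases hv0 : v = 0
    · subst hv0
      rw [hf0]
      simp
    · obtain ⟨C, hC, hCb⟩ := hgrow v hv
      have hvn : 0 < ‖v‖ := norm_pos_iff.mpr hv0
      apply aux_pow_le _ _ (C / ‖v‖) (by positivity)
      intro k
      have h1 : 1 ≤ (2 : ℕ) ^ k := Nat.one_le_two_pow
      have hvpow : ‖v‖ ^ (2 ^ k - 1) * ‖v‖ = ‖v‖ ^ 2 ^ k := by
        rw [← pow_succ]
        congr 1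
        omega
      calc ‖f v‖ ^ 2 ^ k ≤ ‖v‖ ^ (2 ^ k - 1) * ‖f^[2 ^ k] v‖ := hCSpow v hv k
        _ ≤ ‖v‖ ^ (2 ^ k - 1) * (C * B ^ 2 ^ k) :=
            mul_le_mul_of_nonneg_left (hCb _) (by positivity)
        _ = C / ‖v‖ * (B * ‖v‖) ^ 2 ^ k := by
            rw [mul_pow, ← hvpow]
            field_simp
  have hbound2 : ∀ v ∈ K, ‖f (f v)‖ ≤ B ^ 2 * ‖v‖ := by
    intro v hv
    calc ‖f (f v)‖ ≤ B * ‖f v‖ := hbound1 (f v) (hfK v hv)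
      _ ≤ B * (B * ‖v‖) := mul_le_mul_of_nonneg_left (hbound1 v hv) hB.le
      _ = B ^ 2 * ‖v‖ := by ring
  -- the operator  S = B² - A²  on K
  set S : H → H := fun v => ((B : ℂ)) ^ 2 • v - f (f v) with hSdef
  have hSK : ∀ v ∈ K, S v ∈ K := fun v hv =>
    K.sub_mem (K.smul_mem _ hv) (hfK _ (hfK v hv))
  have hSinner : ∀ v w, v ∈ K → w ∈ K →
      (inner ℂ (S v) w : ℂ) = (B : ℂ) ^ 2 * inner ℂ v w - inner ℂ (f v) (f w) := by
    intro v w hv hw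
    show (inner ℂ ((B : ℂ) ^ 2 • v - f (f v)) w : ℂ) = _
    rw [inner_sub_left, inner_smul_left,
      hfsymm (f v) w (hKdom _ (hfK v hv)) (hKdom w hw)]
    congr 1
    rw [map_pow, Complex.conj_ofReal]
  have hpsi : ∀ v ∈ K, (inner ℂ (S v) v : ℂ) = ((B ^ 2 * ‖v‖ ^ 2 - ‖f v‖ ^ 2 : ℝ) : ℂ) := by
    intro v hv
    rw [hSinner v v hv hv, inner_self_eq_norm_sq_to_K, inner_self_eq_norm_sq_to_K]
    push_cast
    rfl
  have hpsi_nonneg : ∀ v ∈ K, 0 ≤ B ^ 2 * ‖v‖ ^ 2 - ‖f v‖ ^ 2 := by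
    intro v hv
    have h1 := hbound1 v hv
    nlinarith [norm_nonneg (f v), norm_nonneg v]
  have hconj : ∀ p q, p ∈ K → q ∈ K →
      (inner ℂ (S p) q : ℂ) = (starRingEnd ℂ) (inner ℂ (S q) p) := by
    intro p q hp hq
    rw [hSinner p q hp hq, hSinner q p hq hp]
    simp only [map_sub, map_mul, map_pow, Complex.conj_ofReal, inner_conj_symm]
  have hexpand : ∀ (s r : ℂ) (v w : H), v ∈ K → w ∈ K →
      (inner ℂ (S (s • v + r • w)) (s • v + r • w) : ℂ) =
        (starRingEnd ℂ) s * s * inner ℂ (S v) v + (starRingEnd ℂ) s * r * inner ℂ (S v) w +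
        (starRingEnd ℂ) r * s * inner ℂ (S w) v + (starRingEnd ℂ) r * r * inner ℂ (S w) w := by
    intro s r v w hv hw
    have hvK : s • v + r • w ∈ K := K.add_mem (K.smul_mem s hv) (K.smul_mem r hw)
    have hfz : f (s • v + r • w) = s • f v + r • f w := by
      rw [hf_add _ _ (A.domain.smul_mem s (hKdom v hv)) (A.domain.smul_mem r (hKdom w hw)),
        hf_smul s v (hKdom v hv), hf_smul r w (hKdom w hw)]
    rw [hSinner _ _ hvK hvK, hSinner v v hv hv, hSinner v w hv hw,
      hSinner w v hw hv, hSinner w w hw hw, hfz]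
    simp only [inner_add_left, inner_add_right, inner_smul_left, inner_smul_right]
    ring
  have hCS2 : ∀ v w, v ∈ K → w ∈ K →
      ‖(inner ℂ (S v) w : ℂ)‖ ^ 2 ≤
        (B ^ 2 * ‖v‖ ^ 2 - ‖f v‖ ^ 2) * (B ^ 2 * ‖w‖ ^ 2 - ‖f w‖ ^ 2) := by
    intro v w hv hw
    by_cases hc0 : (inner ℂ (S v) w : ℂ) = 0
    · rw [hc0]
      simpa using mul_nonneg (hpsi_nonneg v hv) (hpsi_nonneg w hw)
    · set c : ℂ := inner ℂ (S v) w with hc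
      have hcn : (0 : ℝ) < ‖c‖ := norm_pos_iff.mpr hc0
      set a : ℂ := (starRingEnd ℂ) c / (‖c‖ : ℂ) with ha
      have hcne : (‖c‖ : ℂ) ≠ 0 := by simpa using norm_ne_zero_iff.mpr hc0
      have hac : a * c = (‖c‖ : ℂ) := by
        rw [ha, div_mul_eq_mul_div, conj_mul', mul_div_assoc, div_self hcne, mul_one]
      have haa : (starRingEnd ℂ) a * a = 1 := by
        rw [ha, map_div₀, Complex.conj_conj, Complex.conj_ofReal]
        rw [div_mul_div_comm, mul_comm c _, conj_mul']
        exact div_self (mul_ne_zero hcne hcne)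
      have hca : (starRingEnd ℂ) a * (starRingEnd ℂ) c = (‖c‖ : ℂ) := by
        rw [← map_mul, hac, Complex.conj_ofReal]
      have key : ∀ t : ℝ, 0 ≤ (B ^ 2 * ‖v‖ ^ 2 - ‖f v‖ ^ 2) * t ^ 2 + 2 * ‖c‖ * t +
          (B ^ 2 * ‖w‖ ^ 2 - ‖f w‖ ^ 2) := by
        intro t
        set z : H := (t : ℂ) • v + a • w with hz
        have hzK : z ∈ K := K.add_mem (K.smul_mem _ hv) (K.smul_mem _ hw)
        have h0 : 0 ≤ B ^ 2 * ‖z‖ ^ 2 - ‖f z‖ ^ 2 := hpsi_nonneg z hzK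
        have hq : ((B ^ 2 * ‖z‖ ^ 2 - ‖f z‖ ^ 2 : ℝ) : ℂ) =
            (((B ^ 2 * ‖v‖ ^ 2 - ‖f v‖ ^ 2) * t ^ 2 + 2 * ‖c‖ * t +
              (B ^ 2 * ‖w‖ ^ 2 - ‖f w‖ ^ 2) : ℝ) : ℂ) := by
          rw [← hpsi z hzK, hz, hexpand (t : ℂ) a v w hv hw,
            hpsi v hv, hpsi w hw, ← hc, hconj w v hw hv, ← hc, Complex.conj_ofReal]
          push_cast
          linear_combination (t : ℂ) * hac + (t : ℂ) * hca +
            ((B : ℂ) ^ 2 * (‖w‖ : ℂ) ^ 2 - (‖f w‖ : ℂ) ^ 2) * haa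
        have hq' := Complex.ofReal_inj.mp hq
        linarith [h0, hq'.symm.le, hq'.le]
      have := aux_cs _ _ _ key
      linarith
  have hSbound : ∀ v ∈ K, ‖S v‖ ≤ B ^ 2 * ‖v‖ := by
    intro v hv
    have h1 := hCS2 v (S v) hv (hSK v hv)
    have h2 : (inner ℂ (S v) (S v) : ℂ) = ((‖S v‖ ^ 2 : ℝ) : ℂ) := by
      rw [inner_self_eq_norm_sq_to_K]; push_cast; rfl
    rw [h2] at h1
    have h3 : ‖(((‖S v‖ ^ 2 : ℝ)) : ℂ)‖ = ‖S v‖ ^ 2 := by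
      rw [Complex.norm_real, Real.norm_eq_abs, abs_of_nonneg (sq_nonneg _)]
    rw [h3] at h1
    have h4 := hpsi_nonneg v hv
    have h5 := hpsi_nonneg (S v) (hSK v hv)
    by_contra hlt
    push_neg at hlt
    have hx0 : 0 < ‖S v‖ := lt_of_le_of_lt (by positivity) hlt
    have hPle : B ^ 2 * ‖v‖ ^ 2 - ‖f v‖ ^ 2 ≤ B ^ 2 * ‖v‖ ^ 2 := by
      nlinarith [sq_nonneg ‖f v‖]
    have hQle : B ^ 2 * ‖S v‖ ^ 2 - ‖f (S v)‖ ^ 2 ≤ B ^ 2 * ‖S v‖ ^ 2 := by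
      nlinarith [sq_nonneg ‖f (S v)‖]
    have h6 : (‖S v‖ ^ 2) ^ 2 ≤ B ^ 2 * ‖v‖ ^ 2 * (B ^ 2 * ‖S v‖ ^ 2) :=
      le_trans h1 (mul_le_mul hPle hQle h5 (by positivity))
    have h7 : (B ^ 2 * ‖v‖) ^ 2 < ‖S v‖ ^ 2 := by
      have := mul_self_lt_mul_self (by positivity) hlt
      nlinarith [this]
    have h8 : (B ^ 2 * ‖v‖) ^ 2 * ‖S v‖ ^ 2 < ‖S v‖ ^ 2 * ‖S v‖ ^ 2 :=
      mul_lt_mul_of_pos_right h7 (pow_pos hx0 2)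
    linarith [h6, h8]
  -- the key orthogonality result
  have key : ∀ x, x ∈ perpV A (krylov u) → ∀ n, (inner ℂ x (u n) : ℂ) = 0 := by
    intro x hx n
    obtain ⟨hxdom, hperp⟩ := hx
    have hxw : ∀ w ∈ K, (inner ℂ x (f (f w)) : ℂ) = -inner ℂ x w := by
      intro w hw
      have h1 := hperp w hw (hKdom w hw)
      rw [← hf_eq x hxdom, ← hf_eq w (hKdom w hw),
        hfsymm x (f w) hxdom (hKdom _ (hfK w hw))] at h1
      linear_combination h1
    set Cc : ℝ := 1 + B ^ 2 with hCc
    have hCcpos : (0 : ℝ) < Cc := by positivity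
    set step : H → H := fun v => ((Cc⁻¹ : ℝ) : ℂ) • S v with hstepdef
    set W : ℕ → H := fun m => step^[m] (u n) with hWdef
    have hW0 : W 0 = u n := rfl
    have hWsucc : ∀ m, W (m + 1) = step (W m) := by
      intro m
      show step^[m + 1] (u n) = _
      rw [Function.iterate_succ_apply']
    have hWK : ∀ m, W m ∈ K := by
      intro m
      induction m with
      | zero => exact huK n
      | succ m ih =>
        rw [hWsucc m]
        exact K.smul_mem _ (hSK _ ih)
    set ρ : ℝ := B ^ 2 / Cc with hρdef
    have hρ0 : 0 ≤ ρ := by positivity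
    have hρ1 : ρ < 1 := by
      rw [hρdef, div_lt_one hCcpos, hCc]
      linarith
    have hWnorm : ∀ m, ‖W m‖ ≤ ρ ^ m * ‖u n‖ := by
      intro m
      induction m with
      | zero => simp [hW0]
      | succ m ih =>
        rw [hWsucc m]
        calc ‖step (W m)‖ = ‖(((Cc⁻¹ : ℝ)) : ℂ)‖ * ‖S (W m)‖ := norm_smul _ _
          _ = Cc⁻¹ * ‖S (W m)‖ := by
              rw [Complex.norm_real, Real.norm_eq_abs, abs_of_nonneg (by positivity)]
          _ ≤ Cc⁻¹ * (B ^ 2 * ‖W m‖) := by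
              apply mul_le_mul_of_nonneg_left (hSbound _ (hWK m)) (by positivity)
          _ ≤ Cc⁻¹ * (B ^ 2 * (ρ ^ m * ‖u n‖)) := by
              apply mul_le_mul_of_nonneg_left _ (by positivity)
              apply mul_le_mul_of_nonneg_left ih (by positivity)
          _ = ρ ^ (m + 1) * ‖u n‖ := by
              rw [hρdef]
              field_simp
              linear_combination (-(B ^ 2 * (B ^ 2 / Cc) ^ m * ‖u n‖)) * mul_inv_cancel₀ hCcpos.ne'
    have hWinner : ∀ m, (inner ℂ x (W m) : ℂ) = inner ℂ x (u n) := by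
      intro m
      induction m with
      | zero => rfl
      | succ m ih =>
        rw [hWsucc m]
        calc (inner ℂ x (step (W m)) : ℂ)
            = ((Cc⁻¹ : ℝ) : ℂ) * inner ℂ x (S (W m)) := inner_smul_right _ _ _
          _ = ((Cc⁻¹ : ℝ) : ℂ) * ((B : ℂ) ^ 2 * inner ℂ x (W m) - inner ℂ x (f (f (W m)))) := by
              rw [hSdef]
              congr 1
              rw [inner_sub_right, inner_smul_right]
          _ = ((Cc⁻¹ : ℝ) : ℂ) * (((B : ℂ) ^ 2 + 1) * inner ℂ x (W m)) := by
              rw [hxw (W m) (hWK m)]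
              ring
          _ = inner ℂ x (W m) := by
              rw [show (((Cc⁻¹ : ℝ)) : ℂ) * (((B : ℂ) ^ 2 + 1) * (inner ℂ x (W m) : ℂ)) =
                (((Cc⁻¹ : ℝ)) : ℂ) * ((B : ℂ) ^ 2 + 1) * inner ℂ x (W m) from by ring]
              rw [show (((Cc⁻¹ : ℝ)) : ℂ) * ((B : ℂ) ^ 2 + 1) = 1 from by
                rw [hCc]
                push_cast
                rw [inv_mul_eq_one₀]
                · ring
                · push_cast
                  intro hcon
                  have : (1 + B ^ 2 : ℝ) = 0 := by exact_mod_cast hcon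
                  nlinarith]
              rw [one_mul]
          _ = inner ℂ x (u n) := ih
    have hlim : Filter.Tendsto (fun m => ρ ^ m * ‖u n‖ * ‖x‖) Filter.atTop (nhds 0) := by
      have h := tendsto_pow_atTop_nhds_zero_of_lt_one hρ0 hρ1
      have := (h.mul_const ‖u n‖).mul_const ‖x‖
      simpa using this
    have hle : ∀ m, ‖(inner ℂ x (u n) : ℂ)‖ ≤ ρ ^ m * ‖u n‖ * ‖x‖ := by
      intro m
      rw [← hWinner m]
      calc ‖(inner ℂ x (W m) : ℂ)‖ ≤ ‖x‖ * ‖W m‖ := norm_inner_le_norm _ _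
        _ ≤ ‖x‖ * (ρ ^ m * ‖u n‖) := mul_le_mul_of_nonneg_left (hWnorm m) (norm_nonneg x)
        _ = ρ ^ m * ‖u n‖ * ‖x‖ := by ring
    have h0 : ‖(inner ℂ x (u n) : ℂ)‖ ≤ 0 := ge_of_tendsto' hlim hle
    rw [← norm_eq_zero]
    exact le_antisymm h0 (norm_nonneg _)
  constructor
  · intro x hx
    have hk := key x hx
    rw [SetLike.mem_coe, Submodule.mem_orthogonal]
    intro v hv
    induction hv using Submodule.span_induction with
    | mem y hy =>
      obtain ⟨n, rfl⟩ := hy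
      rw [← inner_conj_symm, hk n, map_zero]
    | zero => exact inner_zero_left _
    | add a b ha hb iha ihb => rw [inner_add_left, iha, ihb, add_zero]
    | smul c a ha ih => rw [inner_smul_left, ih, mul_zero]
  · intro w hw
    obtain ⟨x, hxdom, hxK, rfl⟩ := hw
    have hk := key x hxK
    rw [SetLike.mem_coe, Submodule.mem_orthogonal]
    intro v hv
    induction hv using Submodule.span_induction with
    | mem y hy =>
      obtain ⟨n, rfl⟩ := hy
      obtain ⟨hdom', he⟩ := hu.2 n
      rw [← hsymm ⟨u n, hdom'⟩ ⟨x, hxdom⟩, he, ← inner_conj_symm, hk (n + 1), map_zero]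
    | zero => exact inner_zero_left _
    | add a b ha hb iha ihb => rw [inner_add_left, iha, ihb, add_zero]
    | smul c a ha ih => rw [inner_smul_left, ih, mul_zero]


end KrylovPaper
end
end
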